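/- arXiv:1712.05183 — 10 statements merged into one kernel-verified Lean document; each statement's English description precedes it below -/
import Mathlib

section
/- Let S : ℝ → ℝ be subadditive with S(0) = 0 and lim_{t↓0} S(t) = 0. Then S is continuous at 0 if and only if there exists a strictly negative sequence z_n increasing to 0 with S(z_n) → 0; and in that case S is continuous at every point of ℝ. -/
/-!
Right-continuity at `0` propagates to the left through subadditivity. From
`0 ≤ S 0 ≤ S t + S (-t)` one gets `S t ≥ -S (-t) → 0` as `t ↑ 0`; and for `z < t < 0`,
with `z` a term of the sequence, `S t ≤ S z + S (t - z)`, where `S z` is small and `t - z ↓ 0`.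
Once `S` is continuous at `0`, the sandwich `S x - S (x - y) ≤ S y ≤ S (y - x) + S x` gives
continuity at every `x`.
-/

open Filter Topology Set

/-- `S` is subadditive on `ℝ`. -/
def Subadditive' (S : ℝ → ℝ) : Prop := ∀ x y : ℝ, S (x + y) ≤ S x + S y

namespace Subadditive'

variable {S : ℝ → ℝ}

lemma map_zero_nonneg (hsub : Subadditive' S) : 0 ≤ S 0 := by
  simpa using hsub 0 0

lemma neg_map_neg_le (hsub : Subadditive' S) (t : ℝ) : -S (-t) ≤ S t := by
  have := hsub t (-t)
  rw [add_neg_cancel] at this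
  linarith [hsub.map_zero_nonneg]

lemma tendsto_neg_map_neg_nhdsLT_zero (hlim : Tendsto S (𝓝[>] 0) (𝓝 0)) :
    Tendsto (fun t => -S (-t)) (𝓝[<] 0) (𝓝 0) := by
  simpa using (hlim.comp (by simpa using tendsto_neg_nhdsLT (a := (0 : ℝ)))).neg

lemma eventually_lt_nhdsLT_zero (hsub : Subadditive' S) (hlim : Tendsto S (𝓝[>] 0) (𝓝 0))
    {z : ℕ → ℝ} (hz : ∀ n, z n < 0) (hz0 : Tendsto z atTop (𝓝 0))
    (hSz : Tendsto (fun n => S (z n)) atTop (𝓝 0)) {ε : ℝ} (hε : 0 < ε) :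
    ∀ᶠ t in 𝓝[<] 0, S t < ε := by
  obtain ⟨δ, hδ : 0 < δ, hSδ⟩ :=
    mem_nhdsGT_iff_exists_Ioo_subset.mp (hlim (Iio_mem_nhds (half_pos hε)))
  obtain ⟨n, hSzn, hzn⟩ := ((tendsto_order.mp hSz).2 _ (half_pos hε)).and
    ((tendsto_order.mp hz0).1 _ (neg_lt_zero.mpr hδ)) |>.exists
  filter_upwards [Ioo_mem_nhdsLT (hz n)] with t ⟨hzt, ht⟩
  have hgap : S (t - z n) < ε / 2 := hSδ ⟨by linarith, by linarith⟩
  calc S t = S (z n + (t - z n)) := by rw [add_sub_cancel]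
    _ ≤ S (z n) + S (t - z n) := hsub _ _
    _ < ε := by linarith

lemma tendsto_nhdsLT_zero (hsub : Subadditive' S) (hlim : Tendsto S (𝓝[>] 0) (𝓝 0))
    {z : ℕ → ℝ} (hz : ∀ n, z n < 0) (hz0 : Tendsto z atTop (𝓝 0))
    (hSz : Tendsto (fun n => S (z n)) atTop (𝓝 0)) :
    Tendsto S (𝓝[<] 0) (𝓝 0) := by
  refine tendsto_order.mpr
    ⟨fun a ha => ?_, fun ε hε => hsub.eventually_lt_nhdsLT_zero hlim hz hz0 hSz hε⟩
  filter_upwards [(tendsto_order.mp (tendsto_neg_map_neg_nhdsLT_zero hlim)).1 a ha] with t ht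
  exact ht.trans_le (hsub.neg_map_neg_le t)

lemma continuousAt_zero (hsub : Subadditive' S) (h0 : S 0 = 0)
    (hlim : Tendsto S (𝓝[>] 0) (𝓝 0)) {z : ℕ → ℝ} (hz : ∀ n, z n < 0)
    (hz0 : Tendsto z atTop (𝓝 0)) (hSz : Tendsto (fun n => S (z n)) atTop (𝓝 0)) :
    ContinuousAt S 0 := by
  rw [continuousAt_iff_continuous_left'_right', ContinuousWithinAt, ContinuousWithinAt, h0]
  exact ⟨hsub.tendsto_nhdsLT_zero hlim hz hz0 hSz, hlim⟩

lemma continuous_of_continuousAt_zero (hsub : Subadditive' S) (h0 : S 0 = 0)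
    (hc : ContinuousAt S 0) : Continuous S := by
  refine continuous_iff_continuousAt.mpr fun x => ?_
  have hS : Tendsto S (𝓝 0) (𝓝 0) := by simpa [h0] using hc.tendsto
  have hlower : Tendsto (fun y => S x - S (x - y)) (𝓝 x) (𝓝 (S x)) := by
    simpa using tendsto_const_nhds.sub
      (hS.comp ((continuous_const.sub continuous_id).tendsto' x 0 (sub_self x)))
  have hupper : Tendsto (fun y => S (y - x) + S x) (𝓝 x) (𝓝 (S x)) := by
    simpa using (hS.comp ((continuous_id.sub continuous_const).tendsto' x 0 (sub_self x))).add
      tendsto_const_nhds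
  exact tendsto_of_tendsto_of_tendsto_of_le_of_le hlower hupper
    (fun y => sub_le_iff_le_add.mpr (by simpa using hsub y (x - y)))
    (fun y => by simpa using hsub (y - x) x)

end Subadditive'

/-- Paper's Theorem 0 (finite-valued case): for subadditive `S` with `S 0 = 0` and
`S(0+) = 0`, `S` is continuous at `0` iff `S zₙ → 0` for some strictly negative
sequence `zₙ` increasing to `0`; and then `S` is continuous everywhere. -/
theorem berz_theorem0 (S : ℝ → ℝ) (hsub : Subadditive' S) (h0 : S 0 = 0)
    (hlim : Tendsto S (𝓝[>] (0 : ℝ)) (𝓝 0)) :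
    (ContinuousAt S 0 ↔
      ∃ z : ℕ → ℝ, (∀ n, z n < 0) ∧ StrictMono z ∧ Tendsto z atTop (𝓝 0) ∧
        Tendsto (fun n => S (z n)) atTop (𝓝 0)) ∧
    (ContinuousAt S 0 → Continuous S) := by
  refine ⟨⟨fun hc => ?_, ?_⟩, hsub.continuous_of_continuousAt_zero h0⟩
  · obtain ⟨z, hmono, hz, hz0⟩ := exists_seq_strictMono_tendsto' (neg_one_lt_zero (R := ℝ))
    have hSz : Tendsto (fun n => S (z n)) atTop (𝓝 0) := by
      simpa [h0, Function.comp_def] using hc.tendsto.comp hz0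
    exact ⟨z, fun n => (hz n).2, hmono, hz0, hSz⟩
  · rintro ⟨z, hz, -, hz0, hSz⟩
    exact hsub.continuousAt_zero h0 hlim hz hz0 hSz
end

section
/- Let S : ℝ → ℝ be sublinear and locally bounded. Then S restricted to [0,∞) and S restricted to (−∞,0] are both linear: S(x) = x·S(1) for all x ≥ 0 and S(x) = |x|·S(−1) = −x·S(−1) for all x ≤ 0. -/
open Filter Topology Set

/-- `S` is locally bounded: bounded on every bounded interval. -/
def LocallyBounded' (S : ℝ → ℝ) : Prop :=
  ∀ r : ℝ, 0 < r → ∃ M : ℝ, ∀ x : ℝ, |x| ≤ r → |S x| ≤ M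

/-- `S` is sublinear: subadditive and `ℕ`-homogeneous. -/
def Sublinear' (S : ℝ → ℝ) : Prop :=
  Subadditive' S ∧ ∀ x : ℝ, ∀ n : ℕ, S ((n : ℝ) * x) = (n : ℝ) * S x

/-!
Write `x ≥ 0` as `⌊x⌋₊ + t` with `0 ≤ t < 1`. Subadditivity in both directions and local
boundedness on `[-1, 1]` show that `g x := S x - x * S 1` is bounded on `[0, ∞)`. But `g` is
`ℕ`-homogeneous, so `n * |g x| = |g (n * x)|` stays bounded as `n → ∞`, forcing `g x = 0`.
The half-line `(-∞, 0]` is the same statement for `x ↦ S (-x)`.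
-/

lemma eq_zero_of_natHomogeneous_of_abs_le {g : ℝ → ℝ} {C : ℝ}
    (hhom : ∀ x : ℝ, ∀ n : ℕ, g ((n : ℝ) * x) = (n : ℝ) * g x)
    (hbdd : ∀ y : ℝ, 0 ≤ y → |g y| ≤ C) {x : ℝ} (hx : 0 ≤ x) : g x = 0 := by
  by_contra hne
  have hpos : 0 < |g x| := abs_pos.mpr hne
  obtain ⟨n, hn⟩ := exists_nat_gt (C / |g x|)
  have hlarge : C < n * |g x| := (div_lt_iff₀ hpos).mp hn
  have hsmall : (n : ℝ) * |g x| ≤ C := by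
    simpa [hhom, abs_mul] using hbdd (n * x) (by positivity)
  linarith

namespace Sublinear'

variable {S : ℝ → ℝ}

lemma map_natCast (hS : Sublinear' S) (m : ℕ) : S m = m * S 1 := by
  simpa using hS.2 1 m

lemma sub_mul_natHomogeneous (hS : Sublinear' S) (x : ℝ) (n : ℕ) :
    S (n * x) - n * x * S 1 = n * (S x - x * S 1) := by
  rw [hS.2]; ring

lemma abs_sub_mul_le {M : ℝ} (hS : Sublinear' S) (hM : ∀ t : ℝ, |t| ≤ 1 → |S t| ≤ M)
    {y : ℝ} (hy : 0 ≤ y) : |S y - y * S 1| ≤ M + |S 1| := by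
  set m := ⌊y⌋₊
  set t := y - m
  have ht₀ : 0 ≤ t := sub_nonneg.mpr (Nat.floor_le hy)
  have ht₁ : t < 1 := by have := Nat.lt_floor_add_one y; simp only [t]; linarith
  have hupper : S y ≤ S m + S t := by simpa [t] using hS.1 m t
  have hlower : S m ≤ S y + S (-t) := by simpa [t] using hS.1 y (-t)
  have hSt := abs_le.mp (hM t (by rw [abs_of_nonneg ht₀]; linarith))
  have hSnt := abs_le.mp (hM (-t) (by rw [abs_neg, abs_of_nonneg ht₀]; linarith))
  have htS := abs_le.mp (show |t * S 1| ≤ |S 1| by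
    rw [abs_mul, abs_of_nonneg ht₀]; exact mul_le_of_le_one_left (abs_nonneg _) ht₁.le)
  have hy_eq : y * S 1 = m * S 1 + t * S 1 := by simp only [t]; ring
  rw [map_natCast hS] at hupper hlower
  rw [abs_le, hy_eq]
  constructor <;> linarith

lemma eq_mul_of_nonneg (hS : Sublinear' S) (hlb : LocallyBounded' S) {x : ℝ} (hx : 0 ≤ x) :
    S x = x * S 1 := by
  obtain ⟨M, hM⟩ := hlb 1 one_pos
  exact sub_eq_zero.mp <| eq_zero_of_natHomogeneous_of_abs_le (g := fun y => S y - y * S 1)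
    (fun y n => by simpa [mul_assoc] using sub_mul_natHomogeneous hS y n)
    (fun _ hy => abs_sub_mul_le hS hM hy) hx

lemma comp_neg (hS : Sublinear' S) : Sublinear' (fun x => S (-x)) :=
  ⟨fun x y => by simpa only [neg_add] using hS.1 (-x) (-y),
    fun x n => by simpa using hS.2 (-x) n⟩

end Sublinear'

lemma LocallyBounded'.comp_neg {S : ℝ → ℝ} (hlb : LocallyBounded' S) :
    LocallyBounded' (fun x => S (-x)) := fun r hr =>
  let ⟨M, hM⟩ := hlb r hr
  ⟨M, fun x hx => hM (-x) (by rwa [abs_neg])⟩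

/-- Paper's Theorem 1: a locally bounded sublinear `S : ℝ → ℝ` is linear
on each of `[0,∞)` and `(-∞,0]`. -/
theorem berz_theorem1 (S : ℝ → ℝ) (hS : Sublinear' S) (hlb : LocallyBounded' S) :
    (∀ x : ℝ, 0 ≤ x → S x = x * S 1) ∧
    (∀ x : ℝ, x ≤ 0 → S x = |x| * S (-1) ∧ S x = -x * S (-1)) := by
  refine ⟨fun x hx => hS.eq_mul_of_nonneg hlb hx, fun x hx => ?_⟩
  have hneg : S x = -x * S (-1) := by
    simpa using hS.comp_neg.eq_mul_of_nonneg hlb.comp_neg (neg_nonneg.mpr hx)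
  exact ⟨by rw [abs_of_nonpos hx, hneg], hneg⟩
end

section
/- Let S : ℝ → ℝ be sublinear and have the Baire property (i.e. S is Baire measurable). Then S restricted to [0,∞) and S restricted to (−∞,0] are both linear: S(x) = x·S(1) for all x ≥ 0 and S(x) = −x·S(−1) for all x ≤ 0. -/
/-!
Some sublevel set `A = {S < n}` is nonmeagre and, by the Baire property, agrees with a nonempty
open set `V` up to a meagre set; a Piccard-type argument gives `V + V ⊆ A + A`, so by
subadditivity `S < 2n` on a nonempty open set and, after a translation, `S` is bounded above
near `0`. Homogeneity improves this to `S t → 0` as `t → 0`, and subadditivity then makes `S`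
continuous. As `S (q x) = q S x` for rational `q ≥ 0`, continuity gives `S (r x) = r S x` for
real `r ≥ 0`, which is the claim at `x = 1` and `x = -1`.
-/

open Filter Topology Set

/-- `S` has the Baire property: the preimage of every open set differs from an open
set by a meagre set. -/
def HasBaireProperty (S : ℝ → ℝ) : Prop :=
  ∀ U : Set ℝ, IsOpen U → ∃ V : Set ℝ, IsOpen V ∧ IsMeagre (symmDiff (S ⁻¹' U) V)

open scoped Pointwise symmDiff

section BaireGroup

variable {G : Type*} [TopologicalSpace G] [AddCommGroup G] [IsTopologicalAddGroup G] [BaireSpace G]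

theorem add_subset_add_of_isMeagre_symmDiff {A V : Set G} (hV : IsOpen V)
    (hAV : IsMeagre (A ∆ V)) : V + V ⊆ A + A := by
  rintro _ ⟨u, hu, v, hv, rfl⟩
  -- A point `x` of the nonempty open set `V ∩ (u + v - V)` avoiding the meagre sets
  -- `A ∆ V` and `u + v - (A ∆ V)` has `x ∈ A` and `u + v - x ∈ A`.
  set reflect : G ≃ₜ G := Homeomorph.subLeft (u + v)
  have hW : (V ∩ reflect ⁻¹' V).Nonempty := ⟨u, hu, by simpa [reflect] using hv⟩
  have hM : IsMeagre (A ∆ V ∪ reflect ⁻¹' (A ∆ V)) :=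
    hAV.union (hAV.preimage_of_isOpenMap reflect.continuous reflect.isOpenMap)
  obtain ⟨x, ⟨hxV, hxV'⟩, hxM⟩ := not_subset.mp fun h =>
    not_isMeagre_of_isOpen (hV.inter (hV.preimage reflect.continuous)) hW (hM.mono h)
  simp only [mem_union, mem_preimage, mem_symmDiff, not_or, not_and_or, not_not] at hxM hxV'
  exact ⟨x, by tauto, u + v - x, by tauto, add_sub_cancel x (u + v)⟩

end BaireGroup

namespace Subadditive'

variable {S : ℝ → ℝ}

theorem exists_isOpen_bddAbove_of_hasBaireProperty (hsub : Subadditive' S)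
    (hbaire : HasBaireProperty S) : ∃ U : Set ℝ, IsOpen U ∧ U.Nonempty ∧ BddAbove (S '' U) := by
  obtain ⟨n, hn⟩ : ∃ n : ℕ, ¬ IsMeagre (S ⁻¹' Iio (n : ℝ)) := by
    by_contra! h
    have hcover : (⋃ n : ℕ, S ⁻¹' Iio (n : ℝ)) = univ :=
      iUnion_eq_univ_iff.mpr fun x => exists_nat_gt (S x)
    exact not_isMeagre_of_isOpen isOpen_univ univ_nonempty (hcover ▸ isMeagre_iUnion h)
  obtain ⟨V, hV, hAV⟩ := hbaire (Iio (n : ℝ)) isOpen_Iio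
  obtain ⟨v, hv⟩ : V.Nonempty := by
    rw [nonempty_iff_ne_empty]
    rintro rfl
    rw [← bot_eq_empty, symmDiff_bot] at hAV
    exact hn hAV
  refine ⟨V + V, hV.add_left, ⟨v + v, add_mem_add hv hv⟩, 2 * n, ?_⟩
  rintro _ ⟨_, hx, rfl⟩
  obtain ⟨a, ha, b, hb, rfl⟩ := add_subset_add_of_isMeagre_symmDiff hV hAV hx
  have := hsub a b
  simp only [mem_preimage, mem_Iio] at ha hb
  linarith

theorem exists_eventually_le_nhds_zero_of_bddAbove {U : Set ℝ} (hsub : Subadditive' S)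
    (hU : IsOpen U) (hne : U.Nonempty) (hbdd : BddAbove (S '' U)) :
    ∃ C, ∀ᶠ t in 𝓝 0, S t ≤ C := by
  obtain ⟨u, hu⟩ := hne
  obtain ⟨C, hC⟩ := hbdd
  have hshift : Tendsto (· + u) (𝓝 0) (𝓝 u) := (continuous_add_const u).tendsto' 0 u (zero_add u)
  refine ⟨C + S (-u), ?_⟩
  filter_upwards [hshift.eventually (hU.mem_nhds hu)] with t ht
  have := hsub (t + u) (-u)
  rw [add_neg_cancel_right] at this
  linarith [hC (mem_image_of_mem S ht)]

theorem continuous_of_tendsto_nhds_zero (hsub : Subadditive' S)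
    (h0 : Tendsto S (𝓝 0) (𝓝 0)) : Continuous S := by
  refine continuous_iff_continuousAt.mpr fun x => ?_
  rw [ContinuousAt, ← map_add_left_nhds_zero, tendsto_map'_iff]
  have hlower : Tendsto (fun h => S x - S (-h)) (𝓝 0) (𝓝 (S x)) := by
    simpa using tendsto_const_nhds.sub (h0.comp (continuous_neg.tendsto' 0 0 neg_zero))
  have hupper : Tendsto (fun h => S x + S h) (𝓝 0) (𝓝 (S x)) := by
    simpa using tendsto_const_nhds.add h0
  refine tendsto_of_tendsto_of_tendsto_of_le_of_le hlower hupper (fun h => ?_) (fun h => hsub x h)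
  have := hsub (x + h) (-h)
  simp only [add_neg_cancel_right] at this
  simp only [Function.comp_apply]
  linarith

end Subadditive'

namespace Sublinear'

variable {S : ℝ → ℝ}

theorem map_zero (hS : Sublinear' S) : S 0 = 0 := by
  simpa using hS.2 0 0

theorem eventually_lt_nhds_zero {C : ℝ} (hS : Sublinear' S) (hC : ∀ᶠ t in 𝓝 0, S t ≤ C)
    {ε : ℝ} (hε : 0 < ε) : ∀ᶠ t in 𝓝 0, S t < ε := by
  obtain ⟨n, hn⟩ := exists_nat_gt (max C 0 / ε)
  have hpos : (0 : ℝ) < n := lt_of_le_of_lt (by positivity) hn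
  rw [div_lt_iff₀ hε, max_lt_iff] at hn
  have hscale : Tendsto (fun t => (n : ℝ) * t) (𝓝 0) (𝓝 0) :=
    (continuous_const_mul (n : ℝ)).tendsto' 0 0 (mul_zero _)
  filter_upwards [hscale.eventually hC] with t ht
  rw [hS.2] at ht
  nlinarith

theorem tendsto_nhds_zero {C : ℝ} (hS : Sublinear' S) (hC : ∀ᶠ t in 𝓝 0, S t ≤ C) :
    Tendsto S (𝓝 0) (𝓝 0) := by
  refine tendsto_order.mpr ⟨fun a ha => ?_, fun ε hε => hS.eventually_lt_nhds_zero hC hε⟩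
  have hneg : Tendsto Neg.neg (𝓝 (0 : ℝ)) (𝓝 0) := continuous_neg.tendsto' 0 0 neg_zero
  filter_upwards [hneg.eventually (hS.eventually_lt_nhds_zero hC (neg_pos.mpr ha))] with t ht
  have := hS.1 t (-t)
  rw [add_neg_cancel, hS.map_zero] at this
  linarith

theorem map_nnratCast_mul (hS : Sublinear' S) (q : ℚ≥0) (x : ℝ) : S (q * x) = q * S x := by
  have hden : (q.den : ℝ) ≠ 0 := Nat.cast_ne_zero.mpr q.den_ne_zero
  have hnum : (q.den : ℝ) * q = q.num := by exact_mod_cast q.den_mul_eq_num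
  have : (q.den : ℝ) * S (q * x) = q.num * S x := by
    rw [← hS.2, ← mul_assoc, hnum, hS.2]
  rw [← hnum] at this
  exact mul_left_cancel₀ hden (by linarith)

theorem map_mul_of_nonneg (hS : Sublinear' S) (hcont : Continuous S) {r : ℝ} (hr : 0 ≤ r)
    (x : ℝ) : S (r * x) = r * S x := by
  have habs : (fun r => S (|r| * x)) = fun r => |r| * S x := by
    refine Rat.denseRange_cast.equalizer (by fun_prop) (by fun_prop) (funext fun p => ?_)
    have hcast : ((p.nnabs : ℚ≥0) : ℝ) = |(p : ℝ)| := by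
      rw [← Rat.cast_nnratCast, Rat.coe_nnabs, Rat.cast_abs]
    simpa [hcast] using hS.map_nnratCast_mul p.nnabs x
  simpa [abs_of_nonneg hr] using congrFun habs r

end Sublinear'

/-- Paper's Theorem BM (Baire case): a sublinear `S : ℝ → ℝ` with the Baire property
is linear on each of `[0,∞)` and `(-∞,0]`. -/
theorem berz_theoremBM_baire (S : ℝ → ℝ) (hS : Sublinear' S)
    (hbaire : HasBaireProperty S) :
    (∀ x : ℝ, 0 ≤ x → S x = x * S 1) ∧
    (∀ x : ℝ, x ≤ 0 → S x = -x * S (-1)) := by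
  obtain ⟨U, hU, hne, hbdd⟩ := hS.1.exists_isOpen_bddAbove_of_hasBaireProperty hbaire
  obtain ⟨C, hC⟩ := hS.1.exists_eventually_le_nhds_zero_of_bddAbove hU hne hbdd
  have hcont : Continuous S := hS.1.continuous_of_tendsto_nhds_zero (hS.tendsto_nhds_zero hC)
  refine ⟨fun x hx => ?_, fun x hx => ?_⟩
  · simpa using hS.map_mul_of_nonneg hcont hx 1
  · simpa using hS.map_mul_of_nonneg hcont (neg_nonneg.mpr hx) (-1)
end

section
/- Let S : ℝ → ℝ be subadditive and locally bounded, and let 𝔸 be a nontrivial additive subgroup of ℝ (𝔸 ≠ {0}) such that the restriction S|𝔸 is additive, i.e. S(a+b) = S(a) + S(b) for all a, b ∈ 𝔸. Then S|𝔸 is linear: there exists c ∈ ℝ such that S(a) = c·a for all a ∈ 𝔸. -/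
open Filter Topology Set

/-!
Pick `p ≠ 0` in `𝔸` and put `c = S p / p`. Then `g a = S a - c a` is additive on `𝔸` and
vanishes at `p`, so it is `p`-periodic; every `a ∈ 𝔸` differs from an element of
`𝔸 ∩ [-|p|/2, |p|/2]` by a multiple of `p`, so local boundedness of `S` makes `g` bounded on `𝔸`.
A bounded additive function is zero, since `g (n • a) = n g a`.
-/

theorem AddMonoidHom.eq_zero_of_forall_abs_le {G : Type*} [AddMonoid G] (g : G →+ ℝ) (M : ℝ)
    (hM : ∀ x, |g x| ≤ M) : g = 0 := by
  ext x
  by_contra hx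
  have hpos : 0 < |g x| := abs_pos.mpr hx
  obtain ⟨n, hn⟩ := exists_nat_gt (M / |g x|)
  have hle : n * |g x| ≤ M := by
    simpa [map_nsmul, abs_mul] using hM (n • x)
  rw [div_lt_iff₀ hpos] at hn
  linarith

theorem exists_abs_sub_zsmul_le_half (a : ℝ) {p : ℝ} (hp : p ≠ 0) :
    ∃ k : ℤ, |a - k • p| ≤ |p| / 2 := by
  refine ⟨round (a / p), ?_⟩
  have hfactor : a - round (a / p) • p = p * (a / p - round (a / p)) := by
    rw [zsmul_eq_mul]
    field_simp
  calc |a - round (a / p) • p| = |p| * |a / p - round (a / p)| := by rw [hfactor, abs_mul]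
    _ ≤ |p| * (1 / 2) := by gcongr; exact abs_sub_round _
    _ = |p| / 2 := by ring

theorem AddSubgroup.abs_map_le_of_map_eq_zero {A : AddSubgroup ℝ} (g : A →+ ℝ) {p : A}
    (hp : (p : ℝ) ≠ 0) (hgp : g p = 0) {M : ℝ}
    (hM : ∀ x : A, |(x : ℝ)| ≤ |(p : ℝ)| / 2 → |g x| ≤ M) (a : A) : |g a| ≤ M := by
  obtain ⟨k, hk⟩ := exists_abs_sub_zsmul_le_half (a : ℝ) hp
  have hperiodic : g (a - k • p) = g a := by simp [hgp]
  rw [← hperiodic]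
  exact hM _ (by simpa using hk)

theorem berz_theorem2_first_general (S : ℝ → ℝ) (hlb : LocallyBounded' S)
    (A : AddSubgroup ℝ) (hA : A ≠ ⊥)
    (hadd : ∀ a ∈ A, ∀ b ∈ A, S (a + b) = S a + S b) :
    ∃ c : ℝ, ∀ a ∈ A, S a = c * a := by
  obtain ⟨p, hpA, hp⟩ := A.bot_or_exists_ne_zero.resolve_left hA
  obtain ⟨M, hM⟩ := hlb (|p| / 2) (by positivity)
  set c := S p / p
  let g : A →+ ℝ := AddMonoidHom.mk' (fun a ↦ S a - c * a) fun a b ↦ by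
    simp only [AddSubgroup.coe_add, hadd a a.2 b b.2]
    ring
  have hgp : g ⟨p, hpA⟩ = 0 := by simp [g, c, div_mul_cancel₀ _ hp]
  have hg_near_zero : ∀ x : A, |(x : ℝ)| ≤ |p| / 2 → |g x| ≤ M + |c| * (|p| / 2) := by
    intro x hx
    calc |S x - c * x| ≤ |S x| + |c| * |(x : ℝ)| := by rw [← abs_mul]; exact abs_sub _ _
      _ ≤ M + |c| * (|p| / 2) := by gcongr; exact hM x hx
  have hg : g = 0 := g.eq_zero_of_forall_abs_le _
    (AddSubgroup.abs_map_le_of_map_eq_zero g (p := ⟨p, hpA⟩) hp hgp hg_near_zero)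
  refine ⟨c, fun a ha ↦ sub_eq_zero.mp ?_⟩
  exact DFunLike.congr_fun hg ⟨a, ha⟩

/-- Paper's Theorem 2 (first part): if `S : ℝ → ℝ` is subadditive and locally bounded
and `𝔸` is a nontrivial additive subgroup of `ℝ` on which `S` is additive,
then `S` restricted to `𝔸` is linear. -/
theorem berz_theorem2_first (S : ℝ → ℝ) (hsub : Subadditive' S) (hlb : LocallyBounded' S)
    (A : AddSubgroup ℝ) (hA : A ≠ ⊥)
    (hadd : ∀ a ∈ A, ∀ b ∈ A, S (a + b) = S a + S b) :
    ∃ c : ℝ, ∀ a ∈ A, S a = c * a :=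
  berz_theorem2_first_general S hlb A hA hadd
end

section
/- Let 𝔸 be a dense, divisible additive subgroup of ℝ and let S : 𝔸 → ℝ be locally bounded (bounded on every bounded subset of 𝔸) and sublinear on 𝔸 (S(a+b) ≤ S(a)+S(b) and S(na) = nS(a) for all a, b ∈ 𝔸 and n ∈ ℕ). Then S⁺(x) := lim_{δ→0} sup{S(t) : t ∈ (x−δ, x+δ) ∩ 𝔸} and S⁻(x) := lim_{δ→0} inf{S(t) : t ∈ (x−δ, x+δ) ∩ 𝔸} define real-valued, locally bounded, subadditive functions S⁺, S⁻ : ℝ → ℝ satisfying S⁺(kx) = kS⁺(x) and S⁻(kx) = kS⁻(x) for all x ∈ ℝ and k ∈ ℕ, with S⁻(x) ≤ S⁺(x) for all x ∈ ℝ and S⁻(a) ≤ S(a) ≤ S⁺(a) for all a ∈ 𝔸. -/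
/-!
Near every point, `𝓝[𝔸] x` is a proper filter (density) along which `S` is bounded, so its
upper and lower limits are finite and bounded by the local bounds of `S`. Subadditivity
passes to the limits because every `t ∈ 𝔸` near `x + y` splits as `a + (t - a)` with
`a ∈ 𝔸` near `x` and `t - a ∈ 𝔸` near `y`, and conversely sums `a + b` of points of `𝔸`
near `x` and `y` lie in `𝔸` near `x + y`. Homogeneity passes to the limits because, by
divisibility, `t ↦ k t` maps `𝔸` onto itself and hence `𝓝[𝔸] x` onto `𝓝[𝔸] (k x)`.
-/

open Filter Topology Set

/-- `S⁺_𝔸(x) = lim_{δ→0} sup {S t : t ∈ (x-δ, x+δ) ∩ 𝔸}`, i.e. the upper limit of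
`S` at `x` through the set `A`. -/
noncomputable def SPlus (A : Set ℝ) (S : ℝ → ℝ) (x : ℝ) : ℝ :=
  Filter.limsup S (𝓝[A] x)

/-- `S⁻_𝔸(x) = lim_{δ→0} inf {S t : t ∈ (x-δ, x+δ) ∩ 𝔸}`, i.e. the lower limit of
`S` at `x` through the set `A`. -/
noncomputable def SMinus (A : Set ℝ) (S : ℝ → ℝ) (x : ℝ) : ℝ :=
  Filter.liminf S (𝓝[A] x)

section LimsupLiminf

variable {ι : Type*} {f : Filter ι} [f.NeBot] {u : ι → ℝ}

lemma abs_limsup_le_of_eventually_abs_le {M : ℝ} (h : ∀ᶠ i in f, |u i| ≤ M) :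
    |limsup u f| ≤ M := by
  have hle : ∀ᶠ i in f, u i ≤ M := h.mono fun _ hi => (abs_le.1 hi).2
  have hge : ∀ᶠ i in f, -M ≤ u i := h.mono fun _ hi => (abs_le.1 hi).1
  exact abs_le.2 ⟨le_limsup_of_frequently_le hge.frequently (isBoundedUnder_of_eventually_le hle),
    limsup_le_of_le (isCoboundedUnder_le_of_eventually_le f hge) hle⟩

lemma abs_liminf_le_of_eventually_abs_le {M : ℝ} (h : ∀ᶠ i in f, |u i| ≤ M) :
    |liminf u f| ≤ M := by
  have hle : ∀ᶠ i in f, u i ≤ M := h.mono fun _ hi => (abs_le.1 hi).2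
  have hge : ∀ᶠ i in f, -M ≤ u i := h.mono fun _ hi => (abs_le.1 hi).1
  exact abs_le.2 ⟨le_liminf_of_le (isCoboundedUnder_ge_of_eventually_le f hle) hge,
    liminf_le_of_frequently_le hle.frequently (isBoundedUnder_of_eventually_ge hge)⟩

lemma limsup_const_mul_of_nonneg {c : ℝ} (hu : IsBoundedUnder (· ≤ ·) f fun i => |u i|)
    (hc : 0 ≤ c) : limsup (fun i => c * u i) f = c * limsup u f :=
  (Monotone.map_limsup_of_continuousAt (fun _ _ h => mul_le_mul_of_nonneg_left h hc) u
    (continuous_const_mul c).continuousAt (isBoundedUnder_le_abs.1 hu).1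
    (isBoundedUnder_le_abs.1 hu).2.isCoboundedUnder_flip).symm

lemma liminf_const_mul_of_nonneg {c : ℝ} (hu : IsBoundedUnder (· ≤ ·) f fun i => |u i|)
    (hc : 0 ≤ c) : liminf (fun i => c * u i) f = c * liminf u f :=
  (Monotone.map_liminf_of_continuousAt (fun _ _ h => mul_le_mul_of_nonneg_left h hc) u
    (continuous_const_mul c).continuousAt (isBoundedUnder_le_abs.1 hu).1.isCoboundedUnder_flip
    (isBoundedUnder_le_abs.1 hu).2).symm

end LimsupLiminf

namespace AddSubgroup

variable {G : Type*} [AddGroup G] [TopologicalSpace G] [IsTopologicalAddGroup G] (A : AddSubgroup G)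

lemma tendsto_add_nhdsWithin (x y : G) :
    Tendsto (fun p : G × G => p.1 + p.2) (𝓝[A] x ×ˢ 𝓝[A] y) (𝓝[A] (x + y)) := by
  refine tendsto_nhdsWithin_iff.2 ⟨?_, ?_⟩
  · exact (continuous_add.tendsto (x, y)).mono_left
      (nhds_prod_eq (x := x) (y := y) ▸ Filter.prod_mono nhdsWithin_le_nhds nhdsWithin_le_nhds)
  · filter_upwards [eventually_mem_nhdsWithin.prod_inl _, eventually_mem_nhdsWithin.prod_inr _]
      with p h₁ h₂ using A.add_mem h₁ h₂

lemma tendsto_sub_nhdsWithin (x y : G) :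
    Tendsto (fun p : G × G => p.1 - p.2) (𝓝[A] x ×ˢ 𝓝[A] y) (𝓝[A] (x - y)) := by
  refine tendsto_nhdsWithin_iff.2 ⟨?_, ?_⟩
  · exact (continuous_sub.tendsto (x, y)).mono_left
      (nhds_prod_eq (x := x) (y := y) ▸ Filter.prod_mono nhdsWithin_le_nhds nhdsWithin_le_nhds)
  · filter_upwards [eventually_mem_nhdsWithin.prod_inl _, eventually_mem_nhdsWithin.prod_inr _]
      with p h₁ h₂ using A.sub_mem h₁ h₂

end AddSubgroup

section Divisible

variable {A : AddSubgroup ℝ}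

lemma image_natCast_mul_eq (hdiv : ∀ a ∈ A, ∀ k : ℕ, 0 < k → a / (k : ℝ) ∈ A) {k : ℕ}
    (hk : 0 < k) : (fun t => (k : ℝ) * t) '' A = A := by
  refine (image_subset_iff.2 fun t ht => ?_).antisymm fun a ha => ⟨a / k, hdiv a ha k hk, ?_⟩
  · simpa [nsmul_eq_mul] using A.nsmul_mem ht k
  · field_simp

lemma map_natCast_mul_nhdsWithin (hdiv : ∀ a ∈ A, ∀ k : ℕ, 0 < k → a / (k : ℝ) ∈ A) {k : ℕ}
    (hk : 0 < k) (x : ℝ) : map (fun t => (k : ℝ) * t) (𝓝[A] x) = 𝓝[A] (k * x) := by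
  have := (Homeomorph.mulLeft₀ (k : ℝ) (Nat.cast_ne_zero.2 hk.ne')).isEmbedding.map_nhdsWithin_eq
    (A : Set ℝ) x
  rwa [Homeomorph.coe_mulLeft₀, image_natCast_mul_eq hdiv hk] at this

end Divisible

section SetLimits

variable {s : Set ℝ} {S : ℝ → ℝ}

lemma eventually_abs_le_nhdsWithin {r M x : ℝ}
    (hM : ∀ a ∈ s, |a| ≤ r → |S a| ≤ M) (hx : |x| < r) : ∀ᶠ t in 𝓝[s] x, |S t| ≤ M := by
  have hnear : ∀ᶠ t in 𝓝 x, |t| < r := (continuous_abs.tendsto x).eventually (gt_mem_nhds hx)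
  filter_upwards [nhdsWithin_le_nhds hnear, self_mem_nhdsWithin] with t ht hts
    using hM t hts ht.le

lemma isBoundedUnder_abs_nhdsWithin
    (hlb : ∀ r : ℝ, 0 < r → ∃ M : ℝ, ∀ a ∈ s, |a| ≤ r → |S a| ≤ M) (x : ℝ) :
    IsBoundedUnder (· ≤ ·) (𝓝[s] x) fun t => |S t| := by
  obtain ⟨M, hM⟩ := hlb (|x| + 1) (by positivity)
  exact isBoundedUnder_of_eventually_le (eventually_abs_le_nhdsWithin hM (lt_add_one _))

lemma SMinus_le_self {a : ℝ} (ha : a ∈ s)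
    (hS : IsBoundedUnder (· ≤ ·) (𝓝[s] a) fun t => |S t|) : SMinus s S a ≤ S a :=
  liminf_le_of_frequently_le
    ((frequently_pure.2 le_rfl : ∃ᶠ t in pure a, S t ≤ S a).filter_mono (pure_le_nhdsWithin ha))
    (isBoundedUnder_le_abs.1 hS).2

lemma self_le_SPlus {a : ℝ} (ha : a ∈ s)
    (hS : IsBoundedUnder (· ≤ ·) (𝓝[s] a) fun t => |S t|) : S a ≤ SPlus s S a :=
  le_limsup_of_frequently_le
    ((frequently_pure.2 le_rfl : ∃ᶠ t in pure a, S a ≤ S t).filter_mono (pure_le_nhdsWithin ha))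
    (isBoundedUnder_le_abs.1 hS).1

lemma SMinus_le_SPlus {x : ℝ} (hx : x ∈ closure s)
    (hS : IsBoundedUnder (· ≤ ·) (𝓝[s] x) fun t => |S t|) : SMinus s S x ≤ SPlus s S x :=
  have := mem_closure_iff_nhdsWithin_neBot.1 hx
  liminf_le_limsup (isBoundedUnder_le_abs.1 hS).1 (isBoundedUnder_le_abs.1 hS).2

lemma locallyBounded_SPlus (hs : Dense s)
    (hlb : ∀ r : ℝ, 0 < r → ∃ M : ℝ, ∀ a ∈ s, |a| ≤ r → |S a| ≤ M) :
    LocallyBounded' (SPlus s S) := fun r hr => by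
  obtain ⟨M, hM⟩ := hlb (r + 1) (by positivity)
  refine ⟨M, fun x hx => ?_⟩
  have := mem_closure_iff_nhdsWithin_neBot.1 (hs x)
  exact abs_limsup_le_of_eventually_abs_le (eventually_abs_le_nhdsWithin hM (by linarith))

lemma locallyBounded_SMinus (hs : Dense s)
    (hlb : ∀ r : ℝ, 0 < r → ∃ M : ℝ, ∀ a ∈ s, |a| ≤ r → |S a| ≤ M) :
    LocallyBounded' (SMinus s S) := fun r hr => by
  obtain ⟨M, hM⟩ := hlb (r + 1) (by positivity)
  refine ⟨M, fun x hx => ?_⟩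
  have := mem_closure_iff_nhdsWithin_neBot.1 (hs x)
  exact abs_liminf_le_of_eventually_abs_le (eventually_abs_le_nhdsWithin hM (by linarith))

end SetLimits

lemma natCast_mul_eq_of_pos {F : ℝ → ℝ} (hF : ∀ x, ∀ k : ℕ, 0 < k → F (k * x) = k * F x)
    (x : ℝ) (k : ℕ) : F (k * x) = k * F x := by
  rcases k.eq_zero_or_pos with rfl | hk
  · have h0 := hF 0 2 two_pos
    simp only [Nat.cast_ofNat, mul_zero] at h0
    simp only [Nat.cast_zero, zero_mul]
    linarith
  · exact hF x k hk

section SubgroupLimits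

variable {A : AddSubgroup ℝ} {S : ℝ → ℝ}

lemma SPlus_add_le (hA : Dense (A : Set ℝ))
    (hS : ∀ x, IsBoundedUnder (· ≤ ·) (𝓝[A] x) fun t => |S t|)
    (hsub : ∀ a ∈ A, ∀ b ∈ A, S (a + b) ≤ S a + S b) (x y : ℝ) :
    SPlus A S (x + y) ≤ SPlus A S x + SPlus A S y := by
  have := mem_closure_iff_nhdsWithin_neBot.1 (hA x)
  have := mem_closure_iff_nhdsWithin_neBot.1 (hA (x + y))
  refine le_of_forall_pos_le_add fun ε hε => ?_
  have hx : ∀ᶠ a in 𝓝[A] x, S a < SPlus A S x + ε / 2 :=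
    eventually_lt_of_limsup_lt (lt_add_of_pos_right _ (half_pos hε))
      (isBoundedUnder_le_abs.1 (hS x)).1
  have hy : ∀ᶠ b in 𝓝[A] y, S b < SPlus A S y + ε / 2 :=
    eventually_lt_of_limsup_lt (lt_add_of_pos_right _ (half_pos hε))
      (isBoundedUnder_le_abs.1 (hS y)).1
  have hsubtract := A.tendsto_sub_nhdsWithin (x + y) x
  rw [add_sub_cancel_left] at hsubtract
  have hsplit : ∀ᶠ p in 𝓝[A] (x + y) ×ˢ 𝓝[A] x,
      S p.1 ≤ SPlus A S x + SPlus A S y + ε := by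
    filter_upwards [hsubtract.eventually hy, hx.prod_inr _, eventually_mem_nhdsWithin.prod_inl _,
      eventually_mem_nhdsWithin.prod_inr _] with p hpy hpx htA haA
    have := hsub _ haA _ (A.sub_mem htA haA)
    rw [add_sub_cancel] at this
    linarith
  have hnear : ∀ᶠ t in 𝓝[A] (x + y), S t ≤ SPlus A S x + SPlus A S y + ε := by
    rw [← map_fst_prod (𝓝[A] (x + y)) (𝓝[A] x)]
    exact hsplit
  exact limsup_le_of_le (isBoundedUnder_le_abs.1 (hS (x + y))).2.isCoboundedUnder_flip hnear

lemma SMinus_add_le (hA : Dense (A : Set ℝ))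
    (hS : ∀ x, IsBoundedUnder (· ≤ ·) (𝓝[A] x) fun t => |S t|)
    (hsub : ∀ a ∈ A, ∀ b ∈ A, S (a + b) ≤ S a + S b) (x y : ℝ) :
    SMinus A S (x + y) ≤ SMinus A S x + SMinus A S y := by
  have := mem_closure_iff_nhdsWithin_neBot.1 (hA x)
  have := mem_closure_iff_nhdsWithin_neBot.1 (hA y)
  refine le_of_forall_pos_le_add fun ε hε => ?_
  have hx : ∃ᶠ a in 𝓝[A] x, S a < SMinus A S x + ε / 2 ∧ a ∈ A :=
    (frequently_lt_of_liminf_lt (isBoundedUnder_le_abs.1 (hS x)).1.isCoboundedUnder_flip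
      (lt_add_of_pos_right _ (half_pos hε))).and_eventually eventually_mem_nhdsWithin
  have hy : ∃ᶠ b in 𝓝[A] y, S b < SMinus A S y + ε / 2 ∧ b ∈ A :=
    (frequently_lt_of_liminf_lt (isBoundedUnder_le_abs.1 (hS y)).1.isCoboundedUnder_flip
      (lt_add_of_pos_right _ (half_pos hε))).and_eventually eventually_mem_nhdsWithin
  have hsum : ∃ᶠ p in 𝓝[A] x ×ˢ 𝓝[A] y,
      S (p.1 + p.2) ≤ SMinus A S x + SMinus A S y + ε :=
    (frequently_prod_and.2 ⟨hx, hy⟩).mono fun p ⟨⟨ha, haA⟩, hb, hbA⟩ => by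
      linarith [hsub _ haA _ hbA]
  exact liminf_le_of_frequently_le ((A.tendsto_add_nhdsWithin x y).frequently hsum)
    (isBoundedUnder_le_abs.1 (hS (x + y))).2

lemma SPlus_natCast_mul_of_pos (hA : Dense (A : Set ℝ))
    (hS : ∀ x, IsBoundedUnder (· ≤ ·) (𝓝[A] x) fun t => |S t|)
    (hdiv : ∀ a ∈ A, ∀ k : ℕ, 0 < k → a / (k : ℝ) ∈ A)
    (hhom : ∀ a ∈ A, ∀ n : ℕ, S ((n : ℝ) * a) = (n : ℝ) * S a) (x : ℝ) (k : ℕ) (hk : 0 < k) :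
    SPlus A S (k * x) = k * SPlus A S x := by
  have := mem_closure_iff_nhdsWithin_neBot.1 (hA x)
  have hcongr : ∀ᶠ t in 𝓝[A] x, (S ∘ fun s => (k : ℝ) * s) t = k * S t :=
    eventually_mem_nhdsWithin.mono fun t ht => hhom t ht k
  rw [SPlus, ← map_natCast_mul_nhdsWithin hdiv hk, ← limsup_comp, limsup_congr hcongr,
    limsup_const_mul_of_nonneg (hS x) k.cast_nonneg, SPlus]

lemma SMinus_natCast_mul_of_pos (hA : Dense (A : Set ℝ))
    (hS : ∀ x, IsBoundedUnder (· ≤ ·) (𝓝[A] x) fun t => |S t|)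
    (hdiv : ∀ a ∈ A, ∀ k : ℕ, 0 < k → a / (k : ℝ) ∈ A)
    (hhom : ∀ a ∈ A, ∀ n : ℕ, S ((n : ℝ) * a) = (n : ℝ) * S a) (x : ℝ) (k : ℕ) (hk : 0 < k) :
    SMinus A S (k * x) = k * SMinus A S x := by
  have := mem_closure_iff_nhdsWithin_neBot.1 (hA x)
  have hcongr : ∀ᶠ t in 𝓝[A] x, (S ∘ fun s => (k : ℝ) * s) t = k * S t :=
    eventually_mem_nhdsWithin.mono fun t ht => hhom t ht k
  rw [SMinus, ← map_natCast_mul_nhdsWithin hdiv hk, ← liminf_comp, liminf_congr hcongr,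
    liminf_const_mul_of_nonneg (hS x) k.cast_nonneg, SMinus]

end SubgroupLimits

/-- First half of the paper's Theorem 3: for `𝔸` a dense divisible additive subgroup
of `ℝ` and `S` locally bounded and sublinear on `𝔸`, the induced functions
`S⁺ = SPlus 𝔸 S` and `S⁻ = SMinus 𝔸 S` are locally bounded, subadditive and
`ℕ`-homogeneous on `ℝ`, with `S⁻ ≤ S⁺` everywhere and `S⁻ ≤ S ≤ S⁺` on `𝔸`. -/
theorem berz_theorem3_first (A : AddSubgroup ℝ) (hdense : Dense (A : Set ℝ))
    (hdiv : ∀ a ∈ A, ∀ k : ℕ, 0 < k → a / (k : ℝ) ∈ A)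
    (S : ℝ → ℝ)
    (hlb : ∀ r : ℝ, 0 < r → ∃ M : ℝ, ∀ a ∈ A, |a| ≤ r → |S a| ≤ M)
    (hsub : ∀ a ∈ A, ∀ b ∈ A, S (a + b) ≤ S a + S b)
    (hhom : ∀ a ∈ A, ∀ n : ℕ, S ((n : ℝ) * a) = (n : ℝ) * S a) :
    LocallyBounded' (SPlus (A : Set ℝ) S) ∧ LocallyBounded' (SMinus (A : Set ℝ) S) ∧
    Subadditive' (SPlus (A : Set ℝ) S) ∧ Subadditive' (SMinus (A : Set ℝ) S) ∧
    (∀ x : ℝ, ∀ k : ℕ,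
      SPlus (A : Set ℝ) S ((k : ℝ) * x) = (k : ℝ) * SPlus (A : Set ℝ) S x ∧
      SMinus (A : Set ℝ) S ((k : ℝ) * x) = (k : ℝ) * SMinus (A : Set ℝ) S x) ∧
    (∀ x : ℝ, SMinus (A : Set ℝ) S x ≤ SPlus (A : Set ℝ) S x) ∧
    (∀ a ∈ A, SMinus (A : Set ℝ) S a ≤ S a ∧ S a ≤ SPlus (A : Set ℝ) S a) := by
  have hS := isBoundedUnder_abs_nhdsWithin hlb
  refine ⟨locallyBounded_SPlus hdense hlb, locallyBounded_SMinus hdense hlb,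
    SPlus_add_le hdense hS hsub, SMinus_add_le hdense hS hsub, fun x k => ⟨?_, ?_⟩,
    fun x => SMinus_le_SPlus (hdense x) (hS x),
    fun a ha => ⟨SMinus_le_self ha (hS a), self_le_SPlus ha (hS a)⟩⟩
  · exact natCast_mul_eq_of_pos (SPlus_natCast_mul_of_pos hdense hS hdiv hhom) x k
  · exact natCast_mul_eq_of_pos (SMinus_natCast_mul_of_pos hdense hS hdiv hhom) x k
end

section
/- Let 𝔸 be a dense, divisible additive subgroup of ℝ and let S : 𝔸 → ℝ be locally bounded (bounded on every bounded subset of 𝔸) and sublinear on 𝔸 (S(a+b) ≤ S(a)+S(b) and S(na) = nS(a) for all a, b ∈ 𝔸 and n ∈ ℕ). With S⁺(x) := lim_{δ→0} sup{S(t) : t ∈ (x−δ, x+δ) ∩ 𝔸} and S⁻(x) := lim_{δ→0} inf{S(t) : t ∈ (x−δ, x+δ) ∩ 𝔸} we have: (i) S⁺ = S⁻ on [0,∞) and S⁺ = S⁻ on (−∞,0]; (ii) there exist c⁺, c⁻ ∈ ℝ with S⁺(x) = c⁺·x for all x ≥ 0 and S⁺(x) = c⁻·x for all x ≤ 0 (in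 particular S(a) = c⁺·a for a ∈ 𝔸, a ≥ 0, and S(a) = c⁻·a for a ∈ 𝔸, a ≤ 0); (iii) S⁺(a) = S⁻(a) = S(a) for all a ∈ 𝔸. -/
open Filter Topology Set

/-!
For `0 < a` and `0 ≤ b` in `𝔸` write `n b = m a + t` with `m = ⌊n b / a⌋` and `0 ≤ t < a`.
Subadditivity, homogeneity and a bound `M` for `S` on `𝔸 ∩ [0, a)` give `n S(b) ≤ m S(a) + M`;
dividing by `n` and letting `n → ∞` yields `a S(b) ≤ b S(a)`. Swapping `a` and `b` shows that
`S(a)/a` is constant on the positive part of `𝔸`, and the same argument for `x ↦ S(-x)` handles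
the negative part. So `S` agrees on `𝔸` with a continuous piecewise linear `g`, and density of `𝔸`
makes `g` the limit of `S` through `𝔸` at every point, whence `S⁺ = S⁻ = g`.
-/

structure IsSublinearOn (A : AddSubgroup ℝ) (S : ℝ → ℝ) : Prop where
  map_add_le : ∀ a ∈ A, ∀ b ∈ A, S (a + b) ≤ S a + S b
  map_natCast_mul : ∀ a ∈ A, ∀ n : ℕ, S ((n : ℝ) * a) = (n : ℝ) * S a

namespace IsSublinearOn

variable {A : AddSubgroup ℝ} {S : ℝ → ℝ}

theorem map_zero (hS : IsSublinearOn A S) : S 0 = 0 := by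
  simpa using hS.map_natCast_mul 0 A.zero_mem 0

theorem comp_neg (hS : IsSublinearOn A S) : IsSublinearOn A (fun x => S (-x)) where
  map_add_le a ha b hb := by
    simpa only [neg_add] using hS.map_add_le (-a) (A.neg_mem ha) (-b) (A.neg_mem hb)
  map_natCast_mul a ha n := by
    simpa only [mul_neg] using hS.map_natCast_mul (-a) (A.neg_mem ha) n

theorem natCast_mul_sub_le (hS : IsSublinearOn A S) {a b M : ℝ} (ha : a ∈ A) (hb : b ∈ A)
    (ha_pos : 0 < a) (hb_nonneg : 0 ≤ b) (hM : ∀ t ∈ A, 0 ≤ t → t < a → S t ≤ M) (n : ℕ) :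
    (n : ℝ) * (a * S b - b * S a) ≤ a * (|S a| + M) := by
  set m := ⌊n * b / a⌋₊
  have hm_le : (m : ℝ) * a ≤ n * b :=
    (le_div_iff₀ ha_pos).1 (Nat.floor_le (by positivity))
  have hm_gt : (n : ℝ) * b < m * a + a := by
    have := (div_lt_iff₀ ha_pos).1 (Nat.lt_floor_add_one (n * b / a))
    linarith
  have ht : (n : ℝ) * b - m * a ∈ A :=
    A.sub_mem (by simpa using A.nsmul_mem hb n) (by simpa using A.nsmul_mem ha m)
  have hSnb : (n : ℝ) * S b ≤ m * S a + M := by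
    have := hS.map_add_le _ (by simpa using A.nsmul_mem ha m) _ ht
    rw [add_sub_cancel, hS.map_natCast_mul b hb, hS.map_natCast_mul a ha] at this
    linarith [hM _ ht (by linarith) (by linarith)]
  have hdev : ((m : ℝ) * a - n * b) * S a ≤ a * |S a| :=
    (le_abs_self _).trans <| by
      rw [abs_mul, abs_of_nonpos (by linarith)]
      exact mul_le_mul_of_nonneg_right (by linarith) (abs_nonneg _)
  linarith [mul_le_mul_of_nonneg_left hSnb ha_pos.le]

theorem mul_map_le_mul_map (hS : IsSublinearOn A S) {a b M : ℝ} (ha : a ∈ A) (hb : b ∈ A)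
    (ha_pos : 0 < a) (hb_nonneg : 0 ≤ b) (hM : ∀ t ∈ A, 0 ≤ t → t < a → S t ≤ M) :
    a * S b ≤ b * S a := by
  by_contra! h
  obtain ⟨n, hn⟩ := exists_nat_gt (a * (|S a| + M) / (a * S b - b * S a))
  have := hS.natCast_mul_sub_le ha hb ha_pos hb_nonneg hM n
  rw [div_lt_iff₀ (by linarith)] at hn
  linarith

theorem exists_eq_mul_of_nonneg (hS : IsSublinearOn A S)
    (hbdd : ∀ r > 0, ∃ M, ∀ t ∈ A, 0 ≤ t → t < r → S t ≤ M) :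
    ∃ c : ℝ, ∀ a ∈ A, 0 ≤ a → S a = c * a := by
  by_cases hpos : ∃ a₀ ∈ A, 0 < a₀
  · obtain ⟨a₀, ha₀, ha₀_pos⟩ := hpos
    obtain ⟨M₀, hM₀⟩ := hbdd a₀ ha₀_pos
    refine ⟨S a₀ / a₀, fun a ha ha_nonneg => ?_⟩
    rcases ha_nonneg.eq_or_lt with rfl | ha_pos
    · simp [hS.map_zero]
    obtain ⟨M, hM⟩ := hbdd a ha_pos
    have h₁ := hS.mul_map_le_mul_map ha₀ ha ha₀_pos ha_nonneg hM₀
    have h₂ := hS.mul_map_le_mul_map ha ha₀ ha_pos ha₀_pos.le hM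
    field_simp
    linarith
  · refine ⟨0, fun a ha ha_nonneg => ?_⟩
    obtain rfl : 0 = a := ha_nonneg.eq_of_not_lt fun h => hpos ⟨a, ha, h⟩
    simp [hS.map_zero]

theorem exists_eq_mul_of_nonneg_of_nonpos (hS : IsSublinearOn A S)
    (hlb : ∀ r : ℝ, 0 < r → ∃ M : ℝ, ∀ a ∈ A, |a| ≤ r → |S a| ≤ M) :
    ∃ cp cm : ℝ, (∀ a ∈ A, 0 ≤ a → S a = cp * a) ∧ (∀ a ∈ A, a ≤ 0 → S a = cm * a) := by
  have hbdd : ∀ r > 0, ∃ M, ∀ t ∈ A, 0 ≤ t → t < r → S t ≤ M ∧ S (-t) ≤ M := fun r hr => by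
    obtain ⟨M, hM⟩ := hlb r hr
    refine ⟨M, fun t ht ht_nonneg htr => ⟨?_, ?_⟩⟩
    · exact (le_abs_self _).trans (hM t ht (by rw [abs_of_nonneg ht_nonneg]; exact htr.le))
    · exact (le_abs_self _).trans
        (hM (-t) (A.neg_mem ht) (by rw [abs_neg, abs_of_nonneg ht_nonneg]; exact htr.le))
  obtain ⟨cp, hcp⟩ := hS.exists_eq_mul_of_nonneg fun r hr =>
    (hbdd r hr).imp fun _ hM t ht h₀ h₁ => (hM t ht h₀ h₁).1
  obtain ⟨c, hc⟩ := hS.comp_neg.exists_eq_mul_of_nonneg fun r hr =>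
    (hbdd r hr).imp fun _ hM t ht h₀ h₁ => (hM t ht h₀ h₁).2
  refine ⟨cp, -c, hcp, fun a ha ha_nonpos => ?_⟩
  simpa using hc (-a) (A.neg_mem ha) (neg_nonneg.2 ha_nonpos)

end IsSublinearOn

theorem SPlus_eq_and_SMinus_eq_of_eqOn {A : Set ℝ} (hA : Dense A) {S g : ℝ → ℝ}
    (hg : Continuous g) (hSg : EqOn S g A) (x : ℝ) :
    SPlus A S x = g x ∧ SMinus A S x = g x := by
  have : (𝓝[A] x).NeBot := mem_closure_iff_nhdsWithin_neBot.1 (hA x)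
  have hlim : Tendsto S (𝓝[A] x) (𝓝 (g x)) :=
    ((hg.tendsto x).mono_left nhdsWithin_le_nhds).congr' <|
      eventually_nhdsWithin_of_forall fun t ht => (hSg ht).symm
  exact ⟨hlim.limsup_eq, hlim.liminf_eq⟩

theorem berz_theorem3_parts_i_iii_general (A : AddSubgroup ℝ) (hdense : Dense (A : Set ℝ))
    (S : ℝ → ℝ)
    (hlb : ∀ r : ℝ, 0 < r → ∃ M : ℝ, ∀ a ∈ A, |a| ≤ r → |S a| ≤ M)
    (hsub : ∀ a ∈ A, ∀ b ∈ A, S (a + b) ≤ S a + S b)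
    (hhom : ∀ a ∈ A, ∀ n : ℕ, S ((n : ℝ) * a) = (n : ℝ) * S a) :
    (∀ x : ℝ, 0 ≤ x → SPlus (A : Set ℝ) S x = SMinus (A : Set ℝ) S x) ∧
    (∀ x : ℝ, x ≤ 0 → SPlus (A : Set ℝ) S x = SMinus (A : Set ℝ) S x) ∧
    (∃ cp cm : ℝ,
      (∀ x : ℝ, 0 ≤ x → SPlus (A : Set ℝ) S x = cp * x) ∧
      (∀ x : ℝ, x ≤ 0 → SPlus (A : Set ℝ) S x = cm * x) ∧
      (∀ a ∈ A, 0 ≤ a → S a = cp * a) ∧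
      (∀ a ∈ A, a ≤ 0 → S a = cm * a)) ∧
    (∀ a ∈ A, SPlus (A : Set ℝ) S a = S a ∧ SMinus (A : Set ℝ) S a = S a) := by
  obtain ⟨cp, cm, hcp, hcm⟩ := IsSublinearOn.exists_eq_mul_of_nonneg_of_nonpos ⟨hsub, hhom⟩ hlb
  set g : ℝ → ℝ := fun x => cp * max x 0 + cm * min x 0
  have hg_nonneg : ∀ x, 0 ≤ x → g x = cp * x := fun x hx => by simp [g, hx]
  have hg_nonpos : ∀ x, x ≤ 0 → g x = cm * x := fun x hx => by simp [g, hx]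
  have hSg : EqOn S g A := fun a ha => by
    rcases le_total 0 a with h | h
    · rw [hcp a ha h, hg_nonneg a h]
    · rw [hcm a ha h, hg_nonpos a h]
  have hlim := SPlus_eq_and_SMinus_eq_of_eqOn hdense (by continuity) hSg
  refine ⟨fun x _ => ?_, fun x _ => ?_, ⟨cp, cm, fun x hx => ?_, fun x hx => ?_, hcp, hcm⟩,
    fun a ha => ?_⟩
  · rw [(hlim x).1, (hlim x).2]
  · rw [(hlim x).1, (hlim x).2]
  · rw [(hlim x).1, hg_nonneg x hx]
  · rw [(hlim x).1, hg_nonpos x hx]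
  · rw [(hlim a).1, (hlim a).2, hSg ha]; exact ⟨rfl, rfl⟩

/-- Parts (i)-(iii) of the paper's Theorem 3: for `𝔸` a dense divisible additive
subgroup of `ℝ` and `S` locally bounded and sublinear on `𝔸`:
(i) `S⁺ = S⁻` on `[0,∞)` and on `(-∞,0]`;
(ii) `S⁺` is linear on each half-line (hence so is `S` on `𝔸 ∩ ℝ₊` and `𝔸 ∩ ℝ₋`);
(iii) `S⁺ = S⁻ = S` on `𝔸`. -/
theorem berz_theorem3_parts_i_iii (A : AddSubgroup ℝ) (hdense : Dense (A : Set ℝ))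
    (hdiv : ∀ a ∈ A, ∀ k : ℕ, 0 < k → a / (k : ℝ) ∈ A)
    (S : ℝ → ℝ)
    (hlb : ∀ r : ℝ, 0 < r → ∃ M : ℝ, ∀ a ∈ A, |a| ≤ r → |S a| ≤ M)
    (hsub : ∀ a ∈ A, ∀ b ∈ A, S (a + b) ≤ S a + S b)
    (hhom : ∀ a ∈ A, ∀ n : ℕ, S ((n : ℝ) * a) = (n : ℝ) * S a) :
    (∀ x : ℝ, 0 ≤ x → SPlus (A : Set ℝ) S x = SMinus (A : Set ℝ) S x) ∧
    (∀ x : ℝ, x ≤ 0 → SPlus (A : Set ℝ) S x = SMinus (A : Set ℝ) S x) ∧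
    (∃ cp cm : ℝ,
      (∀ x : ℝ, 0 ≤ x → SPlus (A : Set ℝ) S x = cp * x) ∧
      (∀ x : ℝ, x ≤ 0 → SPlus (A : Set ℝ) S x = cm * x) ∧
      (∀ a ∈ A, 0 ≤ a → S a = cp * a) ∧
      (∀ a ∈ A, a ≤ 0 → S a = cm * a)) ∧
    (∀ a ∈ A, SPlus (A : Set ℝ) S a = S a ∧ SMinus (A : Set ℝ) S a = S a) :=
  berz_theorem3_parts_i_iii_general A hdense S hlb hsub hhom
end

section
/- Let 𝔸 be a dense, divisible additive subgroup of ℝ and let S : 𝔸 → ℝ be additive (S(a+b) = S(a) + S(b) for all a, b ∈ 𝔸) and locally bounded (bounded on every bounded subset of 𝔸). Then S is linear: there exists c ∈ ℝ such that S(a) = c·a for all a ∈ 𝔸; moreover the functions S⁺(x) := lim_{δ→0} sup{S(t) : t ∈ (x−δ, x+δ) ∩ 𝔸} and S⁻(x) := lim_{δ→0} inf{S(t) : t ∈ (x−δ, x+δ) ∩ 𝔸} coincide and equal the linear function x ↦ c·x on all of ℝ. -/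
/-!
Additivity makes `S` a `ℚ`-linear map on the divisible group `𝔸`, so `S (q * a₀) = c * (q * a₀)`
for every rational `q`, where `c = S a₀ / a₀` for a fixed `a₀ ≠ 0` in `𝔸`. Local boundedness
turns into continuity of `S` along `𝔸`, since `|a| ≤ 1 / n` gives `n * |S a| = |S (n * a)| ≤ M`.
Since `ℚ a₀` is dense, `S` and `t ↦ c * t` then agree on all of `𝔸`, hence also in the limit
along `𝔸` at any real point.
-/

open Filter Topology Set

theorem tendsto_nhdsWithin_of_eqOn {D : Set ℝ} {S g : ℝ → ℝ} (hg : Continuous g)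
    (h : EqOn S g D) (x : ℝ) : Tendsto S (𝓝[D] x) (𝓝 (g x)) :=
  ((hg.tendsto x).mono_left nhdsWithin_le_nhds).congr' (eventuallyEq_nhdsWithin_of_eqOn h).symm

namespace AdditiveOn

variable {A : AddSubgroup ℝ} {S : ℝ → ℝ}

def toAddMonoidHom (hadd : ∀ a ∈ A, ∀ b ∈ A, S (a + b) = S a + S b) : A →+ ℝ :=
  AddMonoidHom.mk' (fun a => S a) fun a b => hadd a a.2 b b.2

@[simp]
theorem toAddMonoidHom_apply (hadd : ∀ a ∈ A, ∀ b ∈ A, S (a + b) = S a + S b) (a : A) :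
    toAddMonoidHom hadd a = S a :=
  rfl

theorem ratCast_mul_mem (hdiv : ∀ a ∈ A, ∀ k : ℕ, 0 < k → a / (k : ℝ) ∈ A) {a : ℝ} (ha : a ∈ A)
    (q : ℚ) : (q : ℝ) * a ∈ A := by
  have hq : (q : ℝ) * a = q.num * (a / q.den) := by rw [Rat.cast_def]; ring
  rw [hq]
  simpa only [zsmul_eq_mul] using A.zsmul_mem (hdiv a ha q.den q.den_pos) q.num

section

variable (hadd : ∀ a ∈ A, ∀ b ∈ A, S (a + b) = S a + S b)
include hadd

theorem map_natCast_mul {a : ℝ} (ha : a ∈ A) (n : ℕ) : S (n * a) = n * S a := by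
  simpa only [toAddMonoidHom_apply, AddSubgroup.coe_nsmul, nsmul_eq_mul]
    using map_nsmul (toAddMonoidHom hadd) n ⟨a, ha⟩

theorem map_intCast_mul {a : ℝ} (ha : a ∈ A) (m : ℤ) : S (m * a) = m * S a := by
  simpa only [toAddMonoidHom_apply, AddSubgroup.coe_zsmul, zsmul_eq_mul]
    using map_zsmul (toAddMonoidHom hadd) m ⟨a, ha⟩

theorem map_sub {a b : ℝ} (ha : a ∈ A) (hb : b ∈ A) : S (a - b) = S a - S b := by
  simpa only [toAddMonoidHom_apply, AddSubgroup.coe_sub]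
    using _root_.map_sub (toAddMonoidHom hadd) ⟨a, ha⟩ ⟨b, hb⟩

theorem tendsto_nhdsWithin_zero {M : ℝ} (hM : ∀ a ∈ A, |a| ≤ 1 → |S a| ≤ M) :
    Tendsto S (𝓝[A] 0) (𝓝 0) := by
  rw [Metric.tendsto_nhdsWithin_nhds]
  intro ε hε
  obtain ⟨n, hn⟩ := exists_nat_gt (M / ε)
  have hM0 : 0 ≤ M := (abs_nonneg _).trans (hM 0 A.zero_mem (by simp))
  have hn0 : (0 : ℝ) < n := (div_nonneg hM0 hε.le).trans_lt hn
  refine ⟨1 / n, by positivity, fun a ha hdist => ?_⟩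
  rw [Real.dist_0_eq_abs] at hdist ⊢
  have hna : (n : ℝ) * a ∈ A := by simpa only [nsmul_eq_mul] using A.nsmul_mem ha n
  have hbound : n * |S a| ≤ M := by
    have := hM _ hna (by rw [abs_mul, Nat.abs_cast, ← le_div_iff₀' hn0]; exact hdist.le)
    rwa [map_natCast_mul hadd ha, abs_mul, Nat.abs_cast] at this
  rw [div_lt_iff₀ hε] at hn
  nlinarith

theorem tendsto_nhdsWithin_self {M : ℝ} (hM : ∀ a ∈ A, |a| ≤ 1 → |S a| ≤ M) {b : ℝ}
    (hb : b ∈ A) : Tendsto S (𝓝[A] b) (𝓝 (S b)) := by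
  have hshift : Tendsto (fun t => t - b) (𝓝[A] b) (𝓝[A] 0) := by
    refine tendsto_nhdsWithin_iff.mpr ⟨?_, ?_⟩
    · simpa using ((continuous_sub_right b).tendsto b).mono_left nhdsWithin_le_nhds
    · filter_upwards [self_mem_nhdsWithin] with t ht using A.sub_mem ht hb
  have hsum := tendsto_const_nhds (x := S b).add ((tendsto_nhdsWithin_zero hadd hM).comp hshift)
  rw [add_zero] at hsum
  refine hsum.congr' ?_
  filter_upwards [self_mem_nhdsWithin] with t ht
  simp [map_sub hadd ht hb]

variable (hdiv : ∀ a ∈ A, ∀ k : ℕ, 0 < k → a / (k : ℝ) ∈ A)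
include hdiv

theorem map_ratCast_mul {a : ℝ} (ha : a ∈ A) (q : ℚ) : S (q * a) = q * S a := by
  have hfrac := hdiv a ha q.den q.den_pos
  have hden : (q.den : ℝ) * S (a / q.den) = S a := by
    rw [← map_natCast_mul hadd hfrac, mul_div_cancel₀ _ (by positivity)]
  have hq : (q : ℝ) * a = q.num * (a / q.den) := by rw [Rat.cast_def]; ring
  rw [hq, map_intCast_mul hadd hfrac, ← hden, Rat.cast_def]
  field_simp

theorem eq_mul_of_ne_zero {M : ℝ} (hM : ∀ a ∈ A, |a| ≤ 1 → |S a| ≤ M) {a₀ : ℝ} (ha₀ : a₀ ∈ A)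
    (ha₀_ne : a₀ ≠ 0) {b : ℝ} (hb : b ∈ A) : S b = S a₀ / a₀ * b := by
  set D := range fun q : ℚ => (q : ℝ) * a₀
  have hDA : D ⊆ A := by rintro _ ⟨q, rfl⟩; exact ratCast_mul_mem hdiv ha₀ q
  have hDdense : DenseRange fun q : ℚ => (q : ℝ) * a₀ :=
    (Homeomorph.mulRight₀ a₀ ha₀_ne).surjective.denseRange.comp Rat.denseRange_cast
      (continuous_mul_const a₀)
  have hlinD : EqOn S (fun t => S a₀ / a₀ * t) D := by
    rintro _ ⟨q, rfl⟩
    simp only [map_ratCast_mul hadd hdiv ha₀ q]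
    field_simp
  have : (𝓝[D] b).NeBot := mem_closure_iff_nhdsWithin_neBot.mp (hDdense b)
  exact tendsto_nhds_unique
    (tendsto_nhdsWithin_mono_left hDA (tendsto_nhdsWithin_self hadd hM hb))
    (tendsto_nhdsWithin_of_eqOn (continuous_const_mul _) hlinD b)

end

end AdditiveOn

open AdditiveOn in
/-- Part (iv) of the paper's Theorem 3: for `𝔸` a dense divisible additive subgroup
of `ℝ` and `S` additive on `𝔸` and locally bounded, `S` is linear on `𝔸`, and
`S⁺ = S⁻` is the corresponding linear function on all of `ℝ`. -/
theorem berz_theorem3_part_iv (A : AddSubgroup ℝ) (hdense : Dense (A : Set ℝ))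
    (hdiv : ∀ a ∈ A, ∀ k : ℕ, 0 < k → a / (k : ℝ) ∈ A)
    (S : ℝ → ℝ)
    (hlb : ∀ r : ℝ, 0 < r → ∃ M : ℝ, ∀ a ∈ A, |a| ≤ r → |S a| ≤ M)
    (hadd : ∀ a ∈ A, ∀ b ∈ A, S (a + b) = S a + S b) :
    ∃ c : ℝ, (∀ a ∈ A, S a = c * a) ∧
      (∀ x : ℝ, SPlus (A : Set ℝ) S x = c * x ∧ SMinus (A : Set ℝ) S x = c * x) := by
  obtain ⟨a₀, ha₀, ha₀pos, -⟩ := hdense.exists_between (zero_lt_one (α := ℝ))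
  obtain ⟨M, hM⟩ := hlb 1 one_pos
  have hlin : ∀ b ∈ A, S b = S a₀ / a₀ * b := fun b hb =>
    eq_mul_of_ne_zero hadd hdiv hM ha₀ ha₀pos.ne' hb
  refine ⟨S a₀ / a₀, hlin, fun x => ?_⟩
  have : (𝓝[(A : Set ℝ)] x).NeBot := mem_closure_iff_nhdsWithin_neBot.mp (hdense x)
  have hx := tendsto_nhdsWithin_of_eqOn (continuous_const_mul (S a₀ / a₀)) hlin x
  exact ⟨hx.limsup_eq, hx.liminf_eq⟩
end

section
/- Let S : ℝ → ℝ be locally bounded and subadditive with S(0) = 0, and suppose S satisfies the strong Heiberg–Seneta condition, i.e. γ := limsup_{t↓0} S(t)/t < ∞. Define S* : ℝ → ℝ ∪ {+∞} by S*(x) := limsup_{n→∞} n·S(x/n) (limsup taken in the extended reals). Then: S(x) ≤ S*(x) for all x; S*(x+y) ≤ S*(x) + S*(y) for all x, y; S*(kx) = k·S*(x) for all x ∈ ℝ and all k ∈ ℕ, k ≥ 1; and for all t ≥ 0 one has β_S·t ≤ S(t) ≤ S*(t) ≤ γ·t, where β_S := inf_{t>0} S(t)/t. In particular lim_{t↓0}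 S(t) = 0, lim_{t↓0} S*(t) = 0, and sup_{t>0} S(t)/t ≤ γ. -/
open Filter Topology Set

/-- The upper sublinear envelope `S*(x) := limsup_{n→∞} n·S(x/n)`, taken in the
extended reals (so `S*` maps into `ℝ ∪ {±∞}`, and the paper's claims show it is
in fact `ℝ ∪ {+∞}`-valued). -/
noncomputable def SStar (S : ℝ → ℝ) (x : ℝ) : EReal :=
  Filter.limsup (fun n : ℕ => (((n : ℝ) * S (x / (n : ℝ)) : ℝ) : EReal)) Filter.atTop

/-- `γ_S⁺ := limsup_{t↓0} S t / t`, in the extended reals. -/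
noncomputable def gammaPlus (S : ℝ → ℝ) : EReal :=
  Filter.limsup (fun t : ℝ => ((S t / t : ℝ) : EReal)) (𝓝[>] (0 : ℝ))

/-- `β_S := inf_{t>0} S t / t`. -/
noncomputable def betaS (S : ℝ → ℝ) : ℝ :=
  sInf ((fun t => S t / t) '' Set.Ioi (0 : ℝ))

/-! Subdividing `t` into `n` equal pieces gives `S t ≤ n S (t / n)`, so `S*` dominates `S`, and
any slope `c > γ_S⁺` that bounds `S s / s` for small `s > 0` bounds it for every `s > 0`; hence
`S t ≤ γ_S⁺ t` and, termwise, `S* t ≤ γ_S⁺ t`. Local boundedness gives `S(-t) ≤ M (|t| + 2)`, and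
`0 = S 0 ≤ S t + S (-t)` turns this, after the same subdivision, into the linear lower bound
`-M t ≤ S t`; the two linear bounds squeeze `S` and `S*` to `0` at `0+`. Subadditivity of `S*`
comes from that of `S` termwise, and homogeneity from passing to the subsequence `n = k m`. -/

namespace Subadditive'

variable {S : ℝ → ℝ}

theorem le_nat_mul (hsub : Subadditive' S) (h0 : S 0 = 0) (n : ℕ) (x : ℝ) :
    S (n * x) ≤ n * S x := by
  induction n with
  | zero => simp [h0]
  | succ n ih =>
    calc S ((n + 1 : ℕ) * x) = S (n * x + x) := by push_cast; ring_nf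
      _ ≤ S (n * x) + S x := hsub _ _
      _ ≤ (n + 1 : ℕ) * S x := by push_cast; linarith

theorem le_nat_mul_div (hsub : Subadditive' S) (h0 : S 0 = 0) {n : ℕ} (hn : 0 < n) (x : ℝ) :
    S x ≤ n * S (x / n) := by
  simpa [mul_div_cancel₀ x (Nat.cast_ne_zero.2 hn.ne')] using hsub.le_nat_mul h0 n (x / n)

theorem le_mul_abs_add_two (hsub : Subadditive' S) (h0 : S 0 = 0) {M : ℝ}
    (hM : ∀ x, |x| ≤ 1 → S x ≤ M) (x : ℝ) : S x ≤ M * (|x| + 2) := by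
  have hM0 : 0 ≤ M := h0 ▸ hM 0 (by simp)
  set n := ⌈|x|⌉₊ + 1
  have hn : (0 : ℝ) < n := by positivity
  have hxn : |x| ≤ n := (Nat.le_ceil _).trans (by simp [n])
  have hn2 : (n : ℝ) ≤ |x| + 2 := by
    simp only [n, Nat.cast_add, Nat.cast_one]; linarith [Nat.ceil_lt_add_one (abs_nonneg x)]
  calc S x ≤ n * S (x / n) := hsub.le_nat_mul_div h0 (by omega) x
    _ ≤ n * M := by
      gcongr
      exact hM _ (by rw [abs_div, Nat.abs_cast]; exact div_le_one_of_le₀ hxn hn.le)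
    _ ≤ M * (|x| + 2) := by nlinarith

theorem neg_mul_abs_le (hsub : Subadditive' S) (h0 : S 0 = 0) {M : ℝ}
    (hM : ∀ x, |x| ≤ 1 → S x ≤ M) (t : ℝ) : -(M * |t|) ≤ S t := by
  have hM0 : 0 ≤ M := h0 ▸ hM 0 (by simp)
  have affine : ∀ s, -(M * (|s| + 2)) ≤ S s := fun s => by
    have hsum := hsub s (-s)
    have hneg := hsub.le_mul_abs_add_two h0 hM (-s)
    rw [add_neg_cancel, h0] at hsum
    rw [abs_neg] at hneg
    linarith
  refine le_of_forall_pos_le_add fun ε hε => ?_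
  obtain ⟨n, hn⟩ := exists_nat_gt (2 * M / ε)
  have hn0 : (0 : ℝ) < n := lt_of_le_of_lt (by positivity) hn
  have hnt : -(M * (|n * t| + 2)) ≤ n * S t :=
    (affine _).trans (hsub.le_nat_mul h0 n t)
  rw [abs_mul, Nat.abs_cast] at hnt
  have : 2 * M < ε * n := by rwa [div_lt_iff₀' hε] at hn
  nlinarith

theorem le_mul_of_gammaPlus_lt (hsub : Subadditive' S) (h0 : S 0 = 0) {c : ℝ}
    (hc : gammaPlus S < c) {t : ℝ} (ht : 0 < t) : S t ≤ c * t := by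
  obtain ⟨δ, hδ, hsmall⟩ := mem_nhdsGT_iff_exists_Ioc_subset.1 (eventually_lt_of_limsup_lt hc)
  obtain ⟨n, hn⟩ := exists_nat_gt (t / δ)
  have hn0 : (0 : ℝ) < n := (div_pos ht hδ).trans hn
  have hs : t / n ∈ Ioc 0 δ :=
    ⟨div_pos ht hn0, (div_le_iff₀ hn0).2 (by rw [div_lt_iff₀ hδ] at hn; linarith)⟩
  have hslope : S (t / n) / (t / n) < c := by exact_mod_cast hsmall hs
  calc S t ≤ n * S (t / n) := hsub.le_nat_mul_div h0 (by exact_mod_cast hn0) t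
    _ ≤ n * (c * (t / n)) := by gcongr; exact ((div_lt_iff₀ hs.1).1 hslope).le
    _ = c * t := by field_simp

theorem div_le_gammaPlus (hsub : Subadditive' S) (h0 : S 0 = 0) {t : ℝ} (ht : 0 < t) :
    ((S t / t : ℝ) : EReal) ≤ gammaPlus S :=
  EReal.le_of_forall_lt_iff_le.1 fun _ hc => EReal.coe_le_coe_iff.2 <|
    (div_le_iff₀ ht).2 (hsub.le_mul_of_gammaPlus_lt h0 hc ht)

theorem le_sStar (hsub : Subadditive' S) (h0 : S 0 = 0) (x : ℝ) : (S x : EReal) ≤ SStar S x :=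
  le_limsup_of_frequently_le ((eventually_gt_atTop 0).mono fun _ hn =>
    EReal.coe_le_coe_iff.2 (hsub.le_nat_mul_div h0 hn x)).frequently

theorem sStar_add_le (hsub : Subadditive' S) (h0 : S 0 = 0) (x y : ℝ) :
    SStar S (x + y) ≤ SStar S x + SStar S y := by
  have hx : SStar S x ≠ ⊥ := ne_bot_of_le_ne_bot (EReal.coe_ne_bot _) (hsub.le_sStar h0 x)
  have hy : SStar S y ≠ ⊥ := ne_bot_of_le_ne_bot (EReal.coe_ne_bot _) (hsub.le_sStar h0 y)
  refine (limsup_le_limsup (Eventually.of_forall fun n => ?_)).trans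
    (EReal.limsup_add_le (Or.inl hx) (Or.inr hy))
  show ((n * S ((x + y) / n) : ℝ) : EReal) ≤ ((n * S (x / n) : ℝ) : EReal) + (n * S (y / n) : ℝ)
  rw [← EReal.coe_add, EReal.coe_le_coe_iff, ← mul_add, add_div]
  exact mul_le_mul_of_nonneg_left (hsub _ _) n.cast_nonneg

theorem sStar_nat_mul_le (hsub : Subadditive' S) (h0 : S 0 = 0) (x : ℝ) {k : ℕ} (hk : 0 < k) :
    SStar S (k * x) ≤ ((k : ℝ) : EReal) * SStar S x := by
  unfold SStar
  rw [← EReal.limsup_const_mul_of_nonneg_of_ne_top (by positivity) (EReal.coe_ne_top _)]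
  refine limsup_le_limsup (Eventually.of_forall fun n => ?_)
  dsimp only
  rw [← EReal.coe_mul, EReal.coe_le_coe_iff, mul_div_assoc, mul_left_comm]
  exact mul_le_mul_of_nonneg_left (hsub.le_nat_mul h0 k _) n.cast_nonneg

end Subadditive'

theorem nat_mul_sStar_le (S : ℝ → ℝ) (x : ℝ) {k : ℕ} (hk : 0 < k) :
    ((k : ℝ) : EReal) * SStar S x ≤ SStar S (k * x) := by
  have hk' : (k : ℝ) ≠ 0 := Nat.cast_ne_zero.2 hk.ne'
  unfold SStar
  rw [← EReal.limsup_const_mul_of_nonneg_of_ne_top (by positivity) (EReal.coe_ne_top _)]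
  convert (tendsto_id.const_mul_atTop' hk).limsup_comp_le_limsup
    (u := fun n : ℕ => (((n : ℝ) * S (k * x / n) : ℝ) : EReal)) using 3 with m
  simp only [Function.comp_apply, id, Nat.cast_mul, ← EReal.coe_mul]
  rw [mul_div_mul_left _ _ hk', mul_assoc]

theorem sStar_le_mul {S : ℝ → ℝ} {c : ℝ} (hS : ∀ s, 0 ≤ s → S s ≤ c * s) {t : ℝ} (ht : 0 ≤ t) :
    SStar S t ≤ ((c * t : ℝ) : EReal) := by
  refine limsup_le_of_le (by isBoundedDefault) ((eventually_gt_atTop 0).mono fun n hn => ?_)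
  have hn' : (0 : ℝ) < n := by exact_mod_cast hn
  calc ((n * S (t / n) : ℝ) : EReal) ≤ ((n * (c * (t / n)) : ℝ) : EReal) :=
        EReal.coe_le_coe_iff.2 (mul_le_mul_of_nonneg_left (hS _ (by positivity)) hn'.le)
    _ = ((c * t : ℝ) : EReal) := by congr 1; field_simp

theorem tendsto_zero_of_mul_le_of_le_mul {f : ℝ → EReal} {a b : ℝ}
    (ha : ∀ t, 0 < t → ((a * t : ℝ) : EReal) ≤ f t) (hb : ∀ t, 0 < t → f t ≤ ((b * t : ℝ) : EReal)) :
    Tendsto f (𝓝[>] 0) (𝓝 0) := by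
  have hlin : ∀ c : ℝ, Tendsto (fun t : ℝ => ((c * t : ℝ) : EReal)) (𝓝[>] 0) (𝓝 0) := fun c => by
    have := ((continuous_const_mul c).tendsto 0).mono_left (nhdsWithin_le_nhds (s := Ioi 0))
    simpa using EReal.tendsto_coe.2 this
  exact tendsto_of_tendsto_of_tendsto_of_le_of_le' (hlin a) (hlin b)
    (eventually_mem_nhdsWithin.mono ha) (eventually_mem_nhdsWithin.mono hb)

theorem betaS_mul_le {S : ℝ → ℝ} (h0 : S 0 = 0) (hbdd : BddBelow ((fun t => S t / t) '' Ioi 0))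
    {t : ℝ} (ht : 0 ≤ t) : betaS S * t ≤ S t := by
  rcases ht.eq_or_lt with rfl | ht
  · simp [h0]
  · exact (le_div_iff₀ ht).1 (csInf_le hbdd ⟨t, ht, rfl⟩)

/-- Paper's Proposition 1: for `S` locally bounded, subadditive, with `S 0 = 0` and
satisfying the strong Heiberg–Seneta condition `γ_S⁺ < ∞`, the envelope `S*`
dominates `S`, is subadditive and `ℕ`-homogeneous, and `β_S·t ≤ S t ≤ S* t ≤ γ_S⁺·t`
for `t ≥ 0`; in particular `S(0+) = S*(0+) = 0` and `sup_{t>0} S t / t ≤ γ_S⁺`. -/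
theorem berz_proposition1 (S : ℝ → ℝ) (hlb : LocallyBounded' S) (hsub : Subadditive' S)
    (h0 : S 0 = 0) (hSHS : gammaPlus S < ⊤) :
    (∀ x : ℝ, (S x : EReal) ≤ SStar S x) ∧
    (∀ x y : ℝ, SStar S (x + y) ≤ SStar S x + SStar S y) ∧
    (∀ x : ℝ, ∀ k : ℕ, 1 ≤ k → SStar S ((k : ℝ) * x) = ((k : ℝ) : EReal) * SStar S x) ∧
    (∀ t : ℝ, 0 ≤ t →
      ((betaS S * t : ℝ) : EReal) ≤ (S t : EReal) ∧
      (S t : EReal) ≤ SStar S t ∧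
      SStar S t ≤ gammaPlus S * (t : EReal)) ∧
    Tendsto S (𝓝[>] (0 : ℝ)) (𝓝 0) ∧
    Tendsto (SStar S) (𝓝[>] (0 : ℝ)) (𝓝 (0 : EReal)) ∧
    (∀ t : ℝ, 0 < t → ((S t / t : ℝ) : EReal) ≤ gammaPlus S) := by
  obtain ⟨M, hM⟩ := hlb 1 one_pos
  have hlower : ∀ t, 0 < t → -M * t ≤ S t := fun t ht => by
    simpa [abs_of_pos ht] using
      hsub.neg_mul_abs_le h0 (fun x hx => (le_abs_self _).trans (hM x hx)) t
  have hγ : ∀ t, 0 < t → ((S t / t : ℝ) : EReal) ≤ gammaPlus S :=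
    fun t => hsub.div_le_gammaPlus h0
  obtain ⟨g, hg⟩ : ∃ g : ℝ, (g : EReal) = gammaPlus S :=
    ⟨_, EReal.coe_toReal hSHS.ne (ne_bot_of_le_ne_bot (EReal.coe_ne_bot _) (hγ 1 one_pos))⟩
  have hupper : ∀ t, 0 ≤ t → S t ≤ g * t := fun t ht => by
    rcases ht.eq_or_lt with rfl | ht
    · simp [h0]
    · exact (div_le_iff₀ ht).1 (EReal.coe_le_coe_iff.1 (hg ▸ hγ t ht))
  have hβ : ∀ t, 0 ≤ t → betaS S * t ≤ S t := fun t => betaS_mul_le h0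
    ⟨-M, by rintro _ ⟨t, ht, rfl⟩; exact (le_div_iff₀ ht).2 (hlower t ht)⟩
  refine ⟨hsub.le_sStar h0, hsub.sStar_add_le h0,
    fun x k hk => (hsub.sStar_nat_mul_le h0 x hk).antisymm (nat_mul_sStar_le S x hk),
    fun t ht => ⟨EReal.coe_le_coe_iff.2 (hβ t ht), hsub.le_sStar h0 t, hg ▸ sStar_le_mul hupper ht⟩,
    ?_, ?_, hγ⟩
  · refine EReal.tendsto_coe.1 (tendsto_zero_of_mul_le_of_le_mul (a := -M) (b := g) ?_ ?_)
    · exact fun t ht => EReal.coe_le_coe_iff.2 (hlower t ht)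
    · exact fun t ht => EReal.coe_le_coe_iff.2 (hupper t ht.le)
  · refine tendsto_zero_of_mul_le_of_le_mul (a := -M) (b := g) (fun t ht => ?_)
      (fun t ht => sStar_le_mul hupper ht.le)
    exact (EReal.coe_le_coe_iff.2 (hlower t ht)).trans (hsub.le_sStar h0 t)
end

section
/- Let S : ℝ → ℝ be locally bounded and subadditive with S(0) = 0, satisfying the weak Heiberg–Seneta condition: there is a locally Steinhaus–Weil set Σ ⊆ (0,∞) accumulating at 0 with limsup_{t↓0, t∈Σ} S(t)/t < ∞. Let S*(x) := limsup_{n→∞} n·S(x/n), and suppose there is a strictly negative sequence t_n increasing to 0 with S*(t_n) → 0. Then S and S* are both continuous on ℝ, and S* is linear on each half-line: there exist c⁺, c⁻ ∈ ℝ with S*(x) = c⁺·x for all x ≥ 0 and S*(x) = c⁻·x for all x ≤ 0. -/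
/-!
The weak Heiberg–Seneta condition gives `S σ ≤ K σ` for small `σ ∈ Σ`. The `u ≥ 0` with
`S u ≤ K u` form an additive monoid which, by the Steinhaus–Weil property, has interior
points arbitrarily close to `0`, and such a monoid contains all of `(0, ∞)`. On the other
side, `S*(τ) < 1` for one `τ = tₙ < 0` bounds `S` on the grid `τ / m`; writing `v ≤ 0` as a
multiple of `τ / m` plus a positive remainder below `-τ / m` gives `S v ≤ v / τ`. So
`S v ≤ C |v|`, and a subadditive function with such a bound is Lipschitz. Under the bound,
`S*` is the real supremum of `n S(x/n)`, which is again subadditive and bounded by `C |x|`,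
hence Lipschitz; it is `ℕ`-homogeneous, hence by continuity positively homogeneous.
-/
open Filter Topology Set Pointwise

/-- `Σ ⊆ ℝ` is locally Steinhaus–Weil: for `x, y ∈ Σ` and all sufficiently small
`δ > 0`, `x + y` lies in the interior of `Σ_x^δ + Σ_y^δ` and `x - y` lies in the
interior of `Σ_x^δ - Σ_y^δ`, where `Σ_z^δ := Σ ∩ (z - δ, z + δ)`. -/
def LocallySW (Sig : Set ℝ) : Prop :=
  ∀ x ∈ Sig, ∀ y ∈ Sig, ∃ δ₀ : ℝ, 0 < δ₀ ∧ ∀ δ : ℝ, 0 < δ → δ ≤ δ₀ →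
    x + y ∈ interior ((Sig ∩ Set.Ioo (x - δ) (x + δ)) + (Sig ∩ Set.Ioo (y - δ) (y + δ))) ∧
    x - y ∈ interior ((Sig ∩ Set.Ioo (x - δ) (x + δ)) - (Sig ∩ Set.Ioo (y - δ) (y + δ)))

theorem AddSubmonoid.Ioi_subset_of_Ioo_subset {G : Type*} [AddCommGroup G] [LinearOrder G]
    [IsOrderedAddMonoid G] [Archimedean G] {M : AddSubmonoid G} {a b g : G}
    (hab : Ioo a b ⊆ M) (hg : g ∈ M) (hg0 : 0 < g) (hgab : a + g < b) : Ioi a ⊆ M := by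
  intro u hu
  obtain ⟨m, ⟨hm₁, hm₂⟩, -⟩ := existsUnique_sub_zsmul_mem_Ioc hg0 u a
  have hm : 0 ≤ m := by
    by_contra! hm
    have : m • g ≤ (-1 : ℤ) • g := zsmul_le_zsmul_left hg0.le (by omega)
    rw [neg_one_zsmul] at this
    have hgu : a + g < u - m • g := by
      rw [sub_eq_add_neg]
      exact add_lt_add_of_lt_of_le hu (le_neg.1 this)
    exact (hm₂.trans_lt hgu).false
  lift m to ℕ using hm
  rw [natCast_zsmul] at hm₁ hm₂
  simpa using M.add_mem (hab ⟨hm₁, hm₂.trans_lt hgab⟩) (M.nsmul_mem hg m)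

theorem AddSubmonoid.Ioi_subset_of_zero_mem_closure_interior {M : AddSubmonoid ℝ}
    (hM : (M : Set ℝ) ⊆ Ici 0) (h : (0 : ℝ) ∈ _root_.closure (interior (M : Set ℝ))) :
    Ioi (0 : ℝ) ⊆ M := by
  have hint : interior (M : Set ℝ) ⊆ Ioi 0 := interior_Ici (a := (0 : ℝ)) ▸ interior_mono hM
  rw [Metric.mem_closure_iff] at h
  intro u hu
  obtain ⟨x, hx, hxu⟩ := h u hu
  obtain ⟨ε, hε, hball⟩ := Metric.isOpen_iff.1 isOpen_interior x hx
  obtain ⟨g, hg, hgε⟩ := h ε hε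
  rw [Real.ball_eq_Ioo] at hball
  rw [dist_zero_left, Real.norm_eq_abs] at hxu hgε
  refine M.Ioi_subset_of_Ioo_subset (hball.trans interior_subset) (interior_subset hg) (hint hg)
    ?_ ?_
  · linarith [le_abs_self g]
  · show x - ε < u
    linarith [le_abs_self x]

theorem LocallySW.zero_mem_closure_interior_add {Sig : Set ℝ} (hSW : LocallySW Sig)
    (hcl : (0 : ℝ) ∈ closure Sig) {ρ : ℝ} (hρ : 0 < ρ) :
    (0 : ℝ) ∈ closure (interior (Sig ∩ Ioo (-ρ) ρ + Sig ∩ Ioo (-ρ) ρ)) := by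
  refine Metric.mem_closure_iff.2 fun ε hε => ?_
  obtain ⟨s, hs, hsε⟩ := Metric.mem_closure_iff.1 hcl (min (ε / 2) (ρ / 2)) (by positivity)
  rw [dist_zero_left, Real.norm_eq_abs, lt_min_iff, abs_lt, abs_lt] at hsε
  obtain ⟨δ₀, hδ₀, hδ⟩ := hSW s hs s hs
  set δ := min δ₀ (ρ / 2)
  have hδρ : δ ≤ ρ / 2 := min_le_right _ _
  have hnear : Sig ∩ Ioo (s - δ) (s + δ) ⊆ Sig ∩ Ioo (-ρ) ρ :=
    inter_subset_inter_right _ (Ioo_subset_Ioo (by linarith) (by linarith))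
  refine ⟨s + s, interior_mono (add_subset_add hnear hnear)
    (hδ δ (lt_min hδ₀ (half_pos hρ)) (min_le_left _ _)).1, ?_⟩
  rw [dist_zero_left, Real.norm_eq_abs, abs_lt]
  constructor <;> linarith

theorem exists_le_mul_of_limsup_div_lt_top {S : ℝ → ℝ} {Sig : Set ℝ} (hSig : Sig ⊆ Ioi 0)
    (hWHS : limsup (fun t : ℝ => ((S t / t : ℝ) : EReal)) (𝓝[Sig] 0) < ⊤) :
    ∃ K, 0 ≤ K ∧ ∃ ρ > 0, ∀ σ ∈ Sig ∩ Ioo (-ρ) ρ, S σ ≤ K * σ := by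
  obtain ⟨K, hK, -⟩ := EReal.lt_iff_exists_real_btwn.1 hWHS
  obtain ⟨ρ, hρ, hball⟩ := Metric.mem_nhdsWithin_iff.1 (eventually_lt_of_limsup_lt hK)
  refine ⟨max K 0, le_max_right _ _, ρ, hρ, fun σ ⟨hσ, hσρ⟩ => ?_⟩
  have hσ0 : 0 < σ := hSig hσ
  have hσK : S σ / σ < K := by
    refine EReal.coe_lt_coe_iff.1 (hball ⟨?_, hσ⟩)
    rwa [Metric.mem_ball, Real.dist_eq, sub_zero, abs_lt]
  rw [div_lt_iff₀ hσ0] at hσK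
  nlinarith [le_max_left K 0]

section Subadditive

variable {S : ℝ → ℝ}

theorem apply_natCast_mul_le (hsub : Subadditive' S) (h0 : S 0 = 0) (k : ℕ) (y : ℝ) :
    S (k * y) ≤ k * S y := by
  induction k with
  | zero => simp [h0]
  | succ k ih =>
    calc S ((k + 1 : ℕ) * y) = S (k * y + y) := by push_cast; ring_nf
      _ ≤ S (k * y) + S y := hsub _ _
      _ ≤ (k + 1 : ℕ) * S y := by push_cast; linarith

theorem lipschitzWith_of_le_mul_abs (hsub : Subadditive' S) {C : ℝ}
    (hC : ∀ v, S v ≤ C * |v|) : LipschitzWith C.toNNReal S :=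
  LipschitzWith.of_le_add_mul' C fun x y =>
    calc S x = S (y + (x - y)) := by rw [add_sub_cancel]
      _ ≤ S y + C * dist x y := by rw [Real.dist_eq]; linarith [hsub y (x - y), hC (x - y)]

theorem natCast_mul_le_sstar (hsub : Subadditive' S) (h0 : S 0 = 0) (x : ℝ) {m : ℕ}
    (hm : 0 < m) : ((m * S (x / m) : ℝ) : EReal) ≤ SStar S x := by
  refine le_limsup_of_frequently_le' (frequently_atTop.2 fun N => ⟨m * (N + 1), ?_, ?_⟩)
  · nlinarith
  · have hx : x / m = (N + 1 : ℕ) * (x / (m * (N + 1) : ℕ)) := by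
      push_cast
      field_simp
    refine EReal.coe_le_coe_iff.2 ?_
    calc (m : ℝ) * S (x / m) ≤ m * ((N + 1 : ℕ) * S (x / (m * (N + 1) : ℕ))) := by
          rw [hx]
          exact mul_le_mul_of_nonneg_left (apply_natCast_mul_le hsub h0 _ _) m.cast_nonneg
      _ = (m * (N + 1) : ℕ) * S (x / (m * (N + 1) : ℕ)) := by push_cast; ring

theorem exists_forall_pos_le_mul (hsub : Subadditive' S) (h0 : S 0 = 0) {Sig : Set ℝ}
    (hSig : Sig ⊆ Ioi 0) (hSW : LocallySW Sig) (hcl : (0 : ℝ) ∈ closure Sig)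
    (hWHS : limsup (fun t : ℝ => ((S t / t : ℝ) : EReal)) (𝓝[Sig] 0) < ⊤) :
    ∃ K, 0 ≤ K ∧ ∀ u, 0 < u → S u ≤ K * u := by
  obtain ⟨K, hK, ρ, hρ, hKσ⟩ := exists_le_mul_of_limsup_div_lt_top hSig hWHS
  let M : AddSubmonoid ℝ :=
    { carrier := {u | 0 ≤ u ∧ S u ≤ K * u}
      add_mem' := fun {u v} ⟨hu, hSu⟩ ⟨hv, hSv⟩ =>
        ⟨add_nonneg hu hv, (hsub u v).trans (by rw [mul_add]; exact add_le_add hSu hSv)⟩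
      zero_mem' := ⟨le_rfl, by simp [h0]⟩ }
  have hSigM : Sig ∩ Ioo (-ρ) ρ ⊆ M := fun σ hσ => ⟨(hSig hσ.1).le, hKσ σ hσ⟩
  have hM : (0 : ℝ) ∈ closure (interior (M : Set ℝ)) := by
    rw [← M.coe_add_self_eq]
    exact closure_mono (interior_mono (add_subset_add hSigM hSigM))
      (hSW.zero_mem_closure_interior_add hcl hρ)
  exact ⟨K, hK, fun u hu =>
    (M.Ioi_subset_of_zero_mem_closure_interior (fun _ h => h.1) hM hu).2⟩

theorem apply_le_ceil_mul_add (hsub : Subadditive' S) (h0 : S 0 = 0) {K : ℝ} (hK : 0 ≤ K)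
    (hpos : ∀ u, 0 < u → S u ≤ K * u) {w v : ℝ} (hw : w < 0) (hv : v ≤ 0) :
    S v ≤ ⌈v / w⌉₊ * S w + K * -w := by
  set k := ⌈v / w⌉₊
  have hkw : k * w ≤ v := (div_le_iff_of_neg hw).1 (Nat.le_ceil _)
  have hkw' : v + w < k * w := by
    have := Nat.ceil_lt_add_one (div_nonneg_of_nonpos hv hw.le)
    rw [← sub_lt_iff_lt_add, lt_div_iff_of_neg hw] at this
    linarith
  have hr : S (v - k * w) ≤ K * -w := by
    rcases (sub_nonneg.2 hkw).eq_or_lt with h | h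
    · rw [← h, h0]
      exact mul_nonneg hK (by linarith)
    · exact (hpos _ h).trans (mul_le_mul_of_nonneg_left (by linarith) hK)
  calc S v = S (k * w + (v - k * w)) := by ring_nf
    _ ≤ S (k * w) + S (v - k * w) := hsub _ _
    _ ≤ k * S w + K * -w := add_le_add (apply_natCast_mul_le hsub h0 k w) hr

theorem apply_le_div_of_natCast_mul_le_one (hsub : Subadditive' S) (h0 : S 0 = 0) {K : ℝ}
    (hK : 0 ≤ K) (hpos : ∀ u, 0 < u → S u ≤ K * u) {τ : ℝ} (hτ : τ < 0)
    (hτS : ∀ m : ℕ, 0 < m → m * S (τ / m) ≤ 1) {v : ℝ} (hv : v ≤ 0) : S v ≤ v / τ := by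
  have key : ∀ m : ℕ, 0 < m → S v ≤ v / τ + (1 + K * -τ) / m := by
    intro m hm
    have hm0 : (0 : ℝ) < m := Nat.cast_pos.2 hm
    have hw : τ / m < 0 := div_neg_of_neg_of_pos hτ hm0
    have hk := Nat.ceil_lt_add_one (div_nonneg_of_nonpos hv hw.le)
    have hSw : S (τ / m) ≤ 1 / m := by rw [le_div_iff₀ hm0]; linarith [hτS m hm]
    have hkS : ⌈v / (τ / m)⌉₊ * S (τ / m) ≤ (v / (τ / m) + 1) * (1 / m) :=
      (mul_le_mul_of_nonneg_left hSw (Nat.cast_nonneg _)).trans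
        (mul_le_mul_of_nonneg_right hk.le (by positivity))
    calc S v ≤ ⌈v / (τ / m)⌉₊ * S (τ / m) + K * -(τ / m) :=
          apply_le_ceil_mul_add hsub h0 hK hpos hw hv
      _ ≤ (v / (τ / m) + 1) * (1 / m) + K * -(τ / m) := add_le_add_left hkS _
      _ = v / τ + (1 + K * -τ) / m := by field_simp; ring
  refine ge_of_tendsto ?_ (eventually_atTop.2 ⟨1, key⟩)
  simpa using tendsto_const_nhds.add (tendsto_const_div_atTop_nhds_zero_nat (1 + K * -τ))

theorem exists_le_mul_abs (hsub : Subadditive' S) (h0 : S 0 = 0) {Sig : Set ℝ}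
    (hSig : Sig ⊆ Ioi 0) (hSW : LocallySW Sig) (hcl : (0 : ℝ) ∈ closure Sig)
    (hWHS : limsup (fun t : ℝ => ((S t / t : ℝ) : EReal)) (𝓝[Sig] 0) < ⊤)
    {τ : ℝ} (hτ : τ < 0) (hτS : SStar S τ < 1) : ∃ C, ∀ v, S v ≤ C * |v| := by
  obtain ⟨K, hK, hpos⟩ := exists_forall_pos_le_mul hsub h0 hSig hSW hcl hWHS
  have hneg : ∀ v ≤ 0, S v ≤ v / τ := fun v hv =>
    apply_le_div_of_natCast_mul_le_one hsub h0 hK hpos hτ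
      (fun m hm => EReal.coe_le_coe_iff.1 ((natCast_mul_le_sstar hsub h0 τ hm).trans hτS.le)) hv
  refine ⟨max K (-τ)⁻¹, fun v => ?_⟩
  rcases le_or_gt v 0 with hv | hv
  · calc S v ≤ v / τ := hneg v hv
      _ = (-τ)⁻¹ * |v| := by rw [abs_of_nonpos hv]; field_simp
      _ ≤ max K (-τ)⁻¹ * |v| := by gcongr; exact le_max_right _ _
  · calc S v ≤ K * |v| := by rw [abs_of_pos hv]; exact hpos v hv
      _ ≤ max K (-τ)⁻¹ * |v| := by gcongr; exact le_max_left _ _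

end Subadditive

/-- `S*` as a real supremum; the index is shifted so that the junk term `0 * S (x / 0)` is
left out. -/
noncomputable def sublinearEnvelope (S : ℝ → ℝ) (x : ℝ) : ℝ :=
  ⨆ n : ℕ, ((n + 1 : ℕ) : ℝ) * S (x / (n + 1 : ℕ))

section SublinearEnvelope

variable {S : ℝ → ℝ} {C : ℝ}

theorem sublinearEnvelope_zero (h0 : S 0 = 0) : sublinearEnvelope S 0 = 0 := by
  simp [sublinearEnvelope, h0]

variable (hC : ∀ v, S v ≤ C * |v|)
include hC

theorem natCast_mul_apply_div_le (x : ℝ) {m : ℕ} (hm : 0 < m) : m * S (x / m) ≤ C * |x| := by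
  have hm0 : (0 : ℝ) < m := Nat.cast_pos.2 hm
  calc m * S (x / m) ≤ m * (C * |x / m|) := mul_le_mul_of_nonneg_left (hC _) hm0.le
    _ = C * |x| := by rw [abs_div, Nat.abs_cast]; field_simp

theorem bddAbove_sublinearEnvelope_terms (x : ℝ) :
    BddAbove (range fun n : ℕ => ((n + 1 : ℕ) : ℝ) * S (x / (n + 1 : ℕ))) :=
  ⟨C * |x|, forall_mem_range.2 fun n => natCast_mul_apply_div_le hC x n.succ_pos⟩

theorem le_sublinearEnvelope (x : ℝ) {m : ℕ} (hm : 0 < m) :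
    m * S (x / m) ≤ sublinearEnvelope S x := by
  obtain ⟨n, rfl⟩ := Nat.exists_eq_add_one_of_ne_zero hm.ne'
  exact le_ciSup (bddAbove_sublinearEnvelope_terms hC x) n

theorem sublinearEnvelope_le (x : ℝ) : sublinearEnvelope S x ≤ C * |x| :=
  ciSup_le fun n => natCast_mul_apply_div_le hC x n.succ_pos

theorem sstar_eq_sublinearEnvelope (hsub : Subadditive' S) (h0 : S 0 = 0) (x : ℝ) :
    SStar S x = sublinearEnvelope S x := by
  refine le_antisymm (limsup_le_of_le (h := ?_)) ?_
  · filter_upwards [eventually_gt_atTop 0] with m hm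
    exact EReal.coe_le_coe_iff.2 (le_sublinearEnvelope hC x hm)
  · rw [sublinearEnvelope, Monotone.map_ciSup_of_continuousAt
      continuous_coe_real_ereal.continuousAt EReal.coe_strictMono.monotone
      (bddAbove_sublinearEnvelope_terms hC x)]
    exact iSup_le fun n => natCast_mul_le_sstar hsub h0 x n.succ_pos

theorem subadditive_sublinearEnvelope (hsub : Subadditive' S) :
    Subadditive' (sublinearEnvelope S) := fun x y => ciSup_le fun n => by
  have hn : (0 : ℝ) ≤ (n + 1 : ℕ) := Nat.cast_nonneg _
  calc ((n + 1 : ℕ) : ℝ) * S ((x + y) / (n + 1 : ℕ))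
      ≤ (n + 1 : ℕ) * S (x / (n + 1 : ℕ)) + (n + 1 : ℕ) * S (y / (n + 1 : ℕ)) := by
        rw [add_div, ← mul_add]
        exact mul_le_mul_of_nonneg_left (hsub _ _) hn
    _ ≤ sublinearEnvelope S x + sublinearEnvelope S y :=
        add_le_add (le_sublinearEnvelope hC x n.succ_pos) (le_sublinearEnvelope hC y n.succ_pos)

theorem continuous_sublinearEnvelope (hsub : Subadditive' S) :
    Continuous (sublinearEnvelope S) :=
  (lipschitzWith_of_le_mul_abs (subadditive_sublinearEnvelope hC hsub)
    (sublinearEnvelope_le hC)).continuous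

theorem sublinearEnvelope_natCast_mul (hsub : Subadditive' S) (h0 : S 0 = 0) (k : ℕ) (y : ℝ) :
    sublinearEnvelope S (k * y) = k * sublinearEnvelope S y := by
  rcases k.eq_zero_or_pos with rfl | hk
  · simp [sublinearEnvelope_zero h0]
  refine le_antisymm (ciSup_le fun n => ?_) ?_
  · have hn : (0 : ℝ) ≤ (n + 1 : ℕ) := Nat.cast_nonneg _
    calc ((n + 1 : ℕ) : ℝ) * S (k * y / (n + 1 : ℕ))
        ≤ (n + 1 : ℕ) * (k * S (y / (n + 1 : ℕ))) := by
          rw [mul_div_assoc]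
          exact mul_le_mul_of_nonneg_left (apply_natCast_mul_le hsub h0 _ _) hn
      _ = k * ((n + 1 : ℕ) * S (y / (n + 1 : ℕ))) := by ring
      _ ≤ k * sublinearEnvelope S y :=
          mul_le_mul_of_nonneg_left (le_sublinearEnvelope hC y n.succ_pos) (Nat.cast_nonneg _)
  · rw [sublinearEnvelope, Real.mul_iSup_of_nonneg (Nat.cast_nonneg _)]
    refine ciSup_le fun n => ?_
    have hk0 : (k : ℝ) ≠ 0 := Nat.cast_ne_zero.2 hk.ne'
    calc (k : ℝ) * ((n + 1 : ℕ) * S (y / (n + 1 : ℕ)))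
        = (k * (n + 1) : ℕ) * S (k * y / (k * (n + 1) : ℕ)) := by
          push_cast
          rw [mul_div_mul_left _ _ hk0]
          ring
      _ ≤ sublinearEnvelope S (k * y) := le_sublinearEnvelope hC _ (by positivity)

theorem sublinearEnvelope_natCast_div_mul (hsub : Subadditive' S) (h0 : S 0 = 0) (k : ℕ)
    {n : ℕ} (hn : 0 < n) (y : ℝ) :
    sublinearEnvelope S (k / n * y) = k / n * sublinearEnvelope S y := by
  have hn0 : (n : ℝ) ≠ 0 := Nat.cast_ne_zero.2 hn.ne'
  have h := sublinearEnvelope_natCast_mul hC hsub h0 n (k / n * y)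
  rw [← mul_assoc, mul_div_cancel₀ _ hn0, sublinearEnvelope_natCast_mul hC hsub h0] at h
  rw [div_mul_eq_mul_div _ _ (sublinearEnvelope S y), eq_div_iff hn0, h, mul_comm]

theorem sublinearEnvelope_mul_of_nonneg (hsub : Subadditive' S) (h0 : S 0 = 0) {c : ℝ}
    (hc : 0 ≤ c) (y : ℝ) : sublinearEnvelope S (c * y) = c * sublinearEnvelope S y := by
  have hq : Tendsto (fun n : ℕ => (⌊c * n⌋₊ : ℝ) / n) atTop (𝓝 c) :=
    (tendsto_nat_floor_mul_div_atTop hc).comp tendsto_natCast_atTop_atTop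
  refine tendsto_nhds_unique
    (((continuous_sublinearEnvelope hC hsub).tendsto (c * y)).comp (hq.mul_const y))
    ((hq.mul_const (sublinearEnvelope S y)).congr' ?_)
  filter_upwards [eventually_gt_atTop 0] with n hn
  exact (sublinearEnvelope_natCast_div_mul hC hsub h0 _ hn y).symm

end SublinearEnvelope

theorem berz_theorem4_general (S : ℝ → ℝ) (hsub : Subadditive' S)
    (h0 : S 0 = 0)
    (Sig : Set ℝ) (hSig : Sig ⊆ Set.Ioi (0 : ℝ)) (hSW : LocallySW Sig)
    (hacc : AccPt (0 : ℝ) (𝓟 Sig))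
    (hWHS : Filter.limsup (fun t : ℝ => ((S t / t : ℝ) : EReal)) (𝓝[Sig] (0 : ℝ)) < ⊤)
    (t : ℕ → ℝ) (htneg : ∀ n, t n < 0)
    (htS : Tendsto (fun n => SStar S (t n)) atTop (𝓝 (0 : EReal))) :
    Continuous S ∧ Continuous (SStar S) ∧
    ∃ cp cm : ℝ,
      (∀ x : ℝ, 0 ≤ x → SStar S x = ((cp * x : ℝ) : EReal)) ∧
      (∀ x : ℝ, x ≤ 0 → SStar S x = ((cm * x : ℝ) : EReal)) := by
  obtain ⟨N, hN⟩ := (htS.eventually_lt_const zero_lt_one).exists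
  obtain ⟨C, hC⟩ :=
    exists_le_mul_abs hsub h0 hSig hSW hacc.clusterPt.mem_closure hWHS (htneg N) hN
  have hstar := sstar_eq_sublinearEnvelope hC hsub h0
  have hhom {c : ℝ} (hc : 0 ≤ c) (y : ℝ) := sublinearEnvelope_mul_of_nonneg hC hsub h0 hc y
  refine ⟨(lipschitzWith_of_le_mul_abs hsub hC).continuous, ?_, sublinearEnvelope S 1,
    -sublinearEnvelope S (-1), fun x hx => ?_, fun x hx => ?_⟩
  · rw [funext hstar]
    exact continuous_coe_real_ereal.comp (continuous_sublinearEnvelope hC hsub)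
  · have h := hhom hx 1
    rw [mul_one] at h
    rw [hstar, h, mul_comm]
  · have h := hhom (neg_nonneg.2 hx) (-1)
    rw [neg_mul_neg, mul_one] at h
    rw [hstar, h]
    congr 1
    ring

/-- Paper's Theorem 4: for `S` locally bounded and subadditive with `S 0 = 0`,
satisfying the weak Heiberg–Seneta condition, if `S*(tₙ) → 0` for some strictly
negative sequence `tₙ` increasing to `0`, then `S` and its sublinear envelope `S*`
are continuous, and `S*` is linear on each of `[0,∞)` and `(-∞,0]`. -/
theorem berz_theorem4 (S : ℝ → ℝ) (hlb : LocallyBounded' S) (hsub : Subadditive' S)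
    (h0 : S 0 = 0)
    (Sig : Set ℝ) (hSig : Sig ⊆ Set.Ioi (0 : ℝ)) (hSW : LocallySW Sig)
    (hacc : AccPt (0 : ℝ) (𝓟 Sig))
    (hWHS : Filter.limsup (fun t : ℝ => ((S t / t : ℝ) : EReal)) (𝓝[Sig] (0 : ℝ)) < ⊤)
    (t : ℕ → ℝ) (htneg : ∀ n, t n < 0) (htmono : StrictMono t)
    (htlim : Tendsto t atTop (𝓝 0))
    (htS : Tendsto (fun n => SStar S (t n)) atTop (𝓝 (0 : EReal))) :
    Continuous S ∧ Continuous (SStar S) ∧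
    ∃ cp cm : ℝ,
      (∀ x : ℝ, 0 ≤ x → SStar S x = ((cp * x : ℝ) : EReal)) ∧
      (∀ x : ℝ, x ≤ 0 → SStar S x = ((cm * x : ℝ) : EReal)) :=
  berz_theorem4_general S hsub h0 Sig hSig hSW hacc hWHS t htneg htS
end

section
/- Let S : ℝ → ℝ be locally bounded and subadditive with S(0) = 0, satisfying the weak Heiberg–Seneta condition: there is a locally Steinhaus–Weil set Σ ⊆ (0,∞) accumulating at 0 with limsup_{t↓0, t∈Σ} S(t)/t < ∞. Let 𝔸 be a dense, divisible additive subgroup of ℝ such that S|𝔸 is additive: S(a+b) = S(a) + S(b) for all a, b ∈ 𝔸. Then S is linear on all of ℝ: S(t) = β_S·t for every t ∈ ℝ, where β_S := inf_{t>0} S(t)/t. -/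
/-! On the dense subgroup `A`, additivity and local boundedness force `S a = c * a`, and then
subadditivity makes `T x := S x - c * x` an `A`-periodic subadditive function. For `x ∈ ℝ` and a
small `σ ∈ Σ`, the Steinhaus–Weil property puts `σ + σ` in the interior of `Σ_σ^δ + Σ_σ^δ`, so by
density some translate `x + a` (`a ∈ A`) is a sum `s₁ + s₂` of points of `Σ ∩ (0, 2σ)`. The
Heiberg–Seneta bound `T s ≤ K * s` near `0` on `Σ` then gives `T x ≤ 4|K|σ`, so `T ≤ 0`; and
`S x ≤ c * x` for all `x` forces `S x = c * x` by subadditivity at `x + (-x)`. -/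

open Filter Topology Set Pointwise

theorem AddMonoidHom.eq_zero_of_abs_le {G : Type*} [AddMonoid G] (g : G →+ ℝ) {M : ℝ}
    (hM : ∀ x, |g x| ≤ M) : g = 0 := by
  ext x
  by_contra hx
  have hpos : 0 < |g x| := abs_pos.2 hx
  obtain ⟨n, hn⟩ := exists_nat_gt (M / |g x|)
  have := hM (n • x)
  rw [map_nsmul, nsmul_eq_mul, abs_mul, Nat.abs_cast] at this
  exact (lt_of_lt_of_le ((div_lt_iff₀ hpos).1 hn) this).false

theorem AddSubgroup.exists_eq_mul_of_abs_le {A : AddSubgroup ℝ} (f : A →+ ℝ)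
    (hf : ∀ r > 0, ∃ M, ∀ a : A, |(a : ℝ)| ≤ r → |f a| ≤ M) : ∃ c, ∀ a, f a = c * a := by
  by_cases hA : ∀ a : A, (a : ℝ) = 0
  · refine ⟨0, fun a => ?_⟩
    rw [show a = 0 from Subtype.ext (hA a), map_zero, zero_mul]
  push Not at hA
  obtain ⟨a₀, ha₀pos⟩ : ∃ a₀ : A, 0 < (a₀ : ℝ) := by
    obtain ⟨a, ha⟩ := hA
    rcases ha.lt_or_gt with h | h
    · exact ⟨-a, by simpa using h⟩
    · exact ⟨a, h⟩
  set c := f a₀ / a₀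
  let g : A →+ ℝ := f - (AddMonoidHom.mulLeft c).comp A.subtype
  have hg : ∀ a, g a = f a - c * a := fun a => rfl
  have hga₀ : g a₀ = 0 := by rw [hg, div_mul_cancel₀ _ ha₀pos.ne', sub_self]
  obtain ⟨M, hM⟩ := hf a₀ ha₀pos
  -- `g` vanishes at `a₀`, hence is `a₀`-periodic and bounded by its bound on `[0, a₀)`
  have hbdd : ∀ a, |g a| ≤ M + |c| * a₀ := by
    intro a
    set r : A := a - toIcoDiv ha₀pos 0 (a : ℝ) • a₀
    have hr : (r : ℝ) ∈ Ico 0 (a₀ : ℝ) := by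
      simpa [r, ← self_sub_toIcoMod] using toIcoMod_mem_Ico' ha₀pos (a : ℝ)
    have hr' : |(r : ℝ)| ≤ a₀ := by rw [abs_of_nonneg hr.1]; exact hr.2.le
    have hga : g a = g r := by rw [map_sub, map_zsmul, hga₀, smul_zero, sub_zero]
    calc |g a| = |f r - c * r| := by rw [hga, hg]
      _ ≤ |f r| + |c| * |(r : ℝ)| := by rw [← abs_mul]; exact abs_sub _ _
      _ ≤ M + |c| * a₀ := by gcongr; exact hM r hr'
  refine ⟨c, fun a => ?_⟩
  rw [← sub_eq_zero, ← hg, g.eq_zero_of_abs_le hbdd, AddMonoidHom.zero_apply]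

section

variable {S : ℝ → ℝ} {A : AddSubgroup ℝ}

theorem exists_forall_mem_eq_mul_of_map_add (hlb : LocallyBounded' S)
    (hadd : ∀ a ∈ A, ∀ b ∈ A, S (a + b) = S a + S b) : ∃ c, ∀ a ∈ A, S a = c * a := by
  obtain ⟨c, hc⟩ := AddSubgroup.exists_eq_mul_of_abs_le
    (AddMonoidHom.mk' (fun a : A => S a) fun a b => hadd a a.2 b b.2)
    fun r hr => (hlb r hr).imp fun _ hM a => hM a
  exact ⟨c, fun a ha => hc ⟨a, ha⟩⟩

theorem Subadditive'.map_add_of_mem (hsub : Subadditive' S)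
    (hadd : ∀ a ∈ A, ∀ b ∈ A, S (a + b) = S a + S b) {a : ℝ} (ha : a ∈ A) (x : ℝ) :
    S (x + a) = S x + S a := by
  have h0 : S 0 = 0 := by simpa using hadd 0 A.zero_mem 0 A.zero_mem
  have hneg : S (-a) = -S a := by
    have := hadd a ha (-a) (neg_mem ha)
    rw [add_neg_cancel, h0] at this
    linarith
  have := hsub (x + a) (-a)
  rw [add_neg_cancel_right, hneg] at this
  linarith [hsub x a]

theorem Subadditive'.sub_mul (hsub : Subadditive' S) (c : ℝ) :
    Subadditive' fun x => S x - c * x := fun x y => by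
  linarith [hsub x y]

theorem Subadditive'.eq_mul_of_le_mul (hsub : Subadditive' S) {c : ℝ}
    (hle : ∀ x, S x ≤ c * x) : S = fun x => c * x := by
  funext x
  have h0 : 0 ≤ S 0 := by
    have := hsub 0 0
    rw [add_zero] at this
    linarith
  have := hsub x (-x)
  rw [add_neg_cancel] at this
  linarith [hle x, hle (-x)]

end

theorem betaS_mul (c : ℝ) : betaS (fun t => c * t) = c := by
  have himg : (fun t => c * t / t) '' Ioi (0 : ℝ) = {c} :=
    (Set.nonempty_Ioi.image _).subset_singleton_iff.1 fun _ ⟨t, ht, hct⟩ =>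
      hct ▸ mul_div_cancel_right₀ c (ne_of_gt ht)
  rw [betaS, himg, csInf_singleton]

theorem exists_eventually_le_mul_of_limsup_lt_top {f : ℝ → ℝ} {Sig : Set ℝ}
    (hSig : Sig ⊆ Ioi 0)
    (h : limsup (fun t : ℝ => ((f t / t : ℝ) : EReal)) (𝓝[Sig] (0 : ℝ)) < ⊤) :
    ∃ K : ℝ, ∀ᶠ t in 𝓝[Sig] (0 : ℝ), f t ≤ K * t := by
  obtain ⟨K, hK, -⟩ := EReal.lt_iff_exists_real_btwn.1 h
  refine ⟨K, ((eventually_lt_of_limsup_lt hK).and self_mem_nhdsWithin).mono ?_⟩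
  rintro t ⟨hlt, ht⟩
  exact ((div_lt_iff₀ (hSig ht)).1 (EReal.coe_lt_coe_iff.1 hlt)).le

theorem LocallySW.exists_add_mem_eq_add {Sig D : Set ℝ} (hSW : LocallySW Sig) (hD : Dense D)
    {σ : ℝ} (hσ : σ ∈ Sig) (hσpos : 0 < σ) (x : ℝ) :
    ∃ a ∈ D, ∃ s₁ ∈ Sig ∩ Ioo 0 (2 * σ), ∃ s₂ ∈ Sig ∩ Ioo 0 (2 * σ), x + a = s₁ + s₂ := by
  obtain ⟨δ₀, hδ₀, hδ⟩ := hSW σ hσ σ hσ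
  set U := Sig ∩ Ioo (σ - min δ₀ σ) (σ + min δ₀ σ)
  have hU : U ⊆ Sig ∩ Ioo 0 (2 * σ) := fun s ⟨hs, h₁, h₂⟩ =>
    ⟨hs, by linarith [min_le_right δ₀ σ], by linarith [min_le_right δ₀ σ]⟩
  have hint : σ + σ ∈ interior (U + U) := (hδ _ (lt_min hδ₀ hσpos) (min_le_left _ _)).1
  obtain ⟨a, ha, hxa⟩ := hD.exists_mem_open (isOpen_interior.preimage (continuous_const_add x))
    ⟨σ + σ - x, by simpa using hint⟩
  obtain ⟨s₁, hs₁, s₂, hs₂, hsum⟩ := interior_subset hxa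
  exact ⟨a, ha, s₁, hU hs₁, s₂, hU hs₂, hsum.symm⟩

theorem Subadditive'.le_zero_of_periodic {T : ℝ → ℝ} {D Sig : Set ℝ} (hsub : Subadditive' T)
    (hper : ∀ a ∈ D, ∀ x, T (x + a) = T x) (hD : Dense D) (hSig : Sig ⊆ Ioi 0)
    (hSW : LocallySW Sig) (hacc : AccPt 0 (𝓟 Sig)) {K : ℝ}
    (hK : ∀ᶠ t in 𝓝[Sig] 0, T t ≤ K * t) (x : ℝ) : T x ≤ 0 := by
  obtain ⟨ε, hε, hKε⟩ := Metric.eventually_nhds_iff.1 (eventually_nhdsWithin_iff.1 hK)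
  have hKs : ∀ σ, ∀ s ∈ Sig ∩ Ioo 0 (2 * σ), 2 * σ ≤ ε → T s ≤ |K| * (2 * σ) :=
    fun σ s ⟨hs, hs₀, hsσ⟩ hσε => calc
      T s ≤ K * s := hKε (by rw [Real.dist_0_eq_abs, abs_of_pos hs₀]; linarith) hs
      _ ≤ |K| * s := mul_le_mul_of_nonneg_right (le_abs_self K) hs₀.le
      _ ≤ |K| * (2 * σ) := mul_le_mul_of_nonneg_left hsσ.le (abs_nonneg K)
  have hbound : ∀ σ ∈ Sig, 2 * σ ≤ ε → T x ≤ 4 * |K| * σ := by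
    intro σ hσ hσε
    obtain ⟨a, ha, s₁, hs₁, s₂, hs₂, hsum⟩ := hSW.exists_add_mem_eq_add hD hσ (hSig hσ) x
    calc T x = T (s₁ + s₂) := by rw [← hsum, hper a ha]
      _ ≤ T s₁ + T s₂ := hsub _ _
      _ ≤ |K| * (2 * σ) + |K| * (2 * σ) :=
        add_le_add (hKs σ s₁ hs₁ hσε) (hKs σ s₂ hs₂ hσε)
      _ = 4 * |K| * σ := by ring
  have : (𝓝[Sig] (0 : ℝ)).NeBot := hacc.clusterPt
  have hlim : Tendsto (fun σ => 4 * |K| * σ) (𝓝[Sig] 0) (𝓝 0) := by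
    simpa using ((continuous_const_mul (4 * |K|)).tendsto 0).mono_left nhdsWithin_le_nhds
  refine ge_of_tendsto hlim ?_
  filter_upwards [self_mem_nhdsWithin, nhdsWithin_le_nhds (Iio_mem_nhds (half_pos hε))]
    with σ hσ hσε
  exact hbound σ hσ (by linarith [mem_Iio.1 hσε])

theorem berz_theorem5_additive_general (S : ℝ → ℝ) (hlb : LocallyBounded' S) (hsub : Subadditive' S)
    (Sig : Set ℝ) (hSig : Sig ⊆ Set.Ioi (0 : ℝ)) (hSW : LocallySW Sig)
    (hacc : AccPt (0 : ℝ) (𝓟 Sig))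
    (hWHS : Filter.limsup (fun t : ℝ => ((S t / t : ℝ) : EReal)) (𝓝[Sig] (0 : ℝ)) < ⊤)
    (A : AddSubgroup ℝ) (hdense : Dense (A : Set ℝ))
    (hadd : ∀ a ∈ A, ∀ b ∈ A, S (a + b) = S a + S b) :
    ∀ t : ℝ, S t = betaS S * t := by
  obtain ⟨c, hc⟩ := exists_forall_mem_eq_mul_of_map_add hlb hadd
  obtain ⟨K, hK⟩ := exists_eventually_le_mul_of_limsup_lt_top hSig hWHS
  have hper : ∀ a ∈ A, ∀ x, S (x + a) - c * (x + a) = S x - c * x := fun a ha x => by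
    rw [hsub.map_add_of_mem hadd ha, hc a ha]
    ring
  have hle : ∀ x, S x - c * x ≤ 0 :=
    (hsub.sub_mul c).le_zero_of_periodic hper hdense hSig hSW hacc
      (hK.mono fun t ht => show S t - c * t ≤ (K - c) * t by linarith)
  have hS : S = fun x => c * x := hsub.eq_mul_of_le_mul fun x => by linarith [hle x]
  intro t
  rw [hS, betaS_mul]

/-- Additive particular case of the paper's Theorem 5: for `S` locally bounded
and subadditive with `S 0 = 0`, satisfying the weak Heiberg–Seneta condition
(w.r.t. a locally Steinhaus–Weil set `Σ ⊆ (0,∞)` accumulating at `0`), and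
additive on a dense divisible additive subgroup `𝔸` of `ℝ`, the function `S` is
linear on all of `ℝ`: `S t = β_S·t` for every `t`. -/
theorem berz_theorem5_additive (S : ℝ → ℝ) (hlb : LocallyBounded' S) (hsub : Subadditive' S)
    (h0 : S 0 = 0)
    (Sig : Set ℝ) (hSig : Sig ⊆ Set.Ioi (0 : ℝ)) (hSW : LocallySW Sig)
    (hacc : AccPt (0 : ℝ) (𝓟 Sig))
    (hWHS : Filter.limsup (fun t : ℝ => ((S t / t : ℝ) : EReal)) (𝓝[Sig] (0 : ℝ)) < ⊤)
    (A : AddSubgroup ℝ) (hdense : Dense (A : Set ℝ))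
    (hdiv : ∀ a ∈ A, ∀ k : ℕ, 0 < k → a / (k : ℝ) ∈ A)
    (hadd : ∀ a ∈ A, ∀ b ∈ A, S (a + b) = S a + S b) :
    ∀ t : ℝ, S t = betaS S * t :=
  berz_theorem5_additive_general S hlb hsub Sig hSig hSW hacc hWHS A hdense hadd
end
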